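/- arXiv:math/0511320 — 13 statements merged into one kernel-verified Lean document; each statement's English description precedes it below -/
import Mathlib

section
/- Let X be a real linear space, Y a real Banach space, and r, s, t positive integers. If f, g, h : X → Y satisfy f(0) = g(0) = h(0) = 0 and ‖r·f((s·x + t·y)/r) − s·g(x) − t·h(y)‖ ≤ φ(x, y) for all x, y ∈ X, where φ : X × X → [0, ∞) satisfies φ̃(x, y) := (1/(2r)) Σ_{n=0}^∞ 2^{−n} [φ(2ⁿ(r/s)x, 2ⁿ(r/t)y) + φ(2ⁿ(r/s)x, 0) + φ(0, 2ⁿ(r/t)y)] < ∞ for all x, y, then there exists a unique additive map T : X → Y such that ‖f(x) − T(x)‖ ≤ φ̃(x, x) for all x ∈ X. -/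
/-!
Evaluating the hypothesis at `(r x / s, r y / t)`, `(r x / s, 0)` and `(0, r y / t)` and using
`g 0 = h 0 = 0` bounds the Cauchy difference `‖f (x + y) - f x - f y‖` by
`ψ x y = r⁻¹ (φ (r x / s, r y / t) + φ (r x / s, 0) + φ (0, r y / t))`, and the claim becomes
Găvruta's stability theorem for the Cauchy equation with control `ψ`. Hyers' sequence
`2⁻ⁿ f (2ⁿ x)` moves by at most `2⁻ⁿ⁻¹ ψ (2ⁿ x, 2ⁿ x)` at each step, so it converges to a map
`T` within `½ ∑ 2⁻ⁿ ψ (2ⁿ x, 2ⁿ x)` of `f`, and `T` is additive because the Cauchy difference of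
the `n`-th term is at most `2⁻ⁿ ψ (2ⁿ x, 2ⁿ y) → 0`. Two additive maps satisfy
`T x = 2⁻ᵐ T (2ᵐ x)`, so two such approximations differ by a tail of a convergent series.
-/

open Filter Topology

namespace HyersUlam

variable {X Y : Type*} [AddCommGroup X] [NormedAddCommGroup Y] [NormedSpace ℝ Y]

noncomputable def seq (F : X → Y) (n : ℕ) (x : X) : Y := (2 ^ n : ℝ)⁻¹ • F (2 ^ n • x)

noncomputable def limit (F : X → Y) (x : X) : Y := limUnder atTop fun n => seq F n x

variable {F : X → Y} {ψ : X → X → ℝ}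

lemma seq_add_self (n : ℕ) (x : X) : seq F n (x + x) = (2 : ℝ) • seq F (n + 1) x := by
  rw [seq, seq, ← two_nsmul, ← mul_nsmul', ← pow_succ, smul_smul]
  congr 1
  field_simp
  rw [pow_succ]

lemma norm_seq_add_sub_le (hF : ∀ x y, ‖F (x + y) - F x - F y‖ ≤ ψ x y) (n : ℕ) (x y : X) :
    ‖seq F n (x + y) - seq F n x - seq F n y‖ ≤ (2 ^ n : ℝ)⁻¹ * ψ (2 ^ n • x) (2 ^ n • y) := by
  rw [seq, seq, seq, nsmul_add, ← smul_sub, ← smul_sub, norm_smul_of_nonneg (by positivity)]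
  exact mul_le_mul_of_nonneg_left (hF _ _) (by positivity)

lemma dist_seq_succ_le (hF : ∀ x y, ‖F (x + y) - F x - F y‖ ≤ ψ x y) (n : ℕ) (x : X) :
    dist (seq F n x) (seq F (n + 1) x) ≤ 2⁻¹ * ((2 ^ n : ℝ)⁻¹ * ψ (2 ^ n • x) (2 ^ n • x)) := by
  have h : seq F n x - seq F (n + 1) x
      = -((2⁻¹ : ℝ) • (seq F n (x + x) - seq F n x - seq F n x)) := by
    rw [seq_add_self]; module
  rw [dist_eq_norm, h, norm_neg, norm_smul_of_nonneg (by positivity)]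
  exact mul_le_mul_of_nonneg_left (norm_seq_add_sub_le hF n x x) (by positivity)

theorem addMonoidHom_eq_of_norm_sub_le {T₁ T₂ : X →+ Y} (Φ : X → ℝ)
    (hΦ : ∀ x, Tendsto (fun m : ℕ => (2 ^ m : ℝ)⁻¹ * Φ (2 ^ m • x)) atTop (𝓝 0))
    (h : ∀ x, ‖T₁ x - T₂ x‖ ≤ Φ x) : T₁ = T₂ := by
  ext x
  refine eq_of_norm_sub_le_zero (ge_of_tendsto' (hΦ x) fun m => ?_)
  have hscale : T₁ x - T₂ x = (2 ^ m : ℝ)⁻¹ • (T₁ (2 ^ m • x) - T₂ (2 ^ m • x)) := by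
    rw [map_nsmul, map_nsmul, ← smul_sub, ← Nat.cast_smul_eq_nsmul ℝ, smul_smul, Nat.cast_pow,
      Nat.cast_two, inv_mul_cancel₀ (by positivity), one_smul]
  rw [hscale, norm_smul_of_nonneg (by positivity)]
  exact mul_le_mul_of_nonneg_left (h _) (by positivity)

lemma tendsto_inv_two_pow_mul_tsum (w : X → ℝ) (x : X) :
    Tendsto (fun m : ℕ => (2 ^ m : ℝ)⁻¹ * ∑' n : ℕ, (2 ^ n : ℝ)⁻¹ * w (2 ^ n • 2 ^ m • x))
      atTop (𝓝 0) := by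
  refine (tendsto_sum_nat_add fun n => (2 ^ n : ℝ)⁻¹ * w (2 ^ n • x)).congr fun m => ?_
  rw [← tsum_mul_left]
  refine tsum_congr fun n => ?_
  have hpow : (2 ^ m : ℝ)⁻¹ * (2 ^ n)⁻¹ = (2 ^ (n + m))⁻¹ := by rw [pow_add, mul_inv, mul_comm]
  rw [← mul_nsmul, ← pow_add, add_comm m n, ← mul_assoc, hpow]

variable [CompleteSpace Y]

lemma tendsto_seq_limit (hF : ∀ x y, ‖F (x + y) - F x - F y‖ ≤ ψ x y)
    (hψ : ∀ x y, Summable fun n : ℕ => (2 ^ n : ℝ)⁻¹ * ψ (2 ^ n • x) (2 ^ n • y)) (x : X) :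
    Tendsto (fun n => seq F n x) atTop (𝓝 (limit F x)) :=
  (cauchySeq_of_dist_le_of_summable _ (dist_seq_succ_le hF · x)
    ((hψ x x).mul_left 2⁻¹)).tendsto_limUnder

lemma limit_add (hF : ∀ x y, ‖F (x + y) - F x - F y‖ ≤ ψ x y)
    (hψ : ∀ x y, Summable fun n : ℕ => (2 ^ n : ℝ)⁻¹ * ψ (2 ^ n • x) (2 ^ n • y)) (x y : X) :
    limit F (x + y) = limit F x + limit F y := by
  have hlim := ((tendsto_seq_limit hF hψ (x + y)).sub (tendsto_seq_limit hF hψ x)).sub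
    (tendsto_seq_limit hF hψ y)
  have hzero := squeeze_zero_norm (norm_seq_add_sub_le hF · x y) (hψ x y).tendsto_atTop_zero
  rw [← sub_eq_zero, ← sub_sub]
  exact tendsto_nhds_unique hlim hzero

lemma norm_sub_limit_le (hF : ∀ x y, ‖F (x + y) - F x - F y‖ ≤ ψ x y)
    (hψ : ∀ x y, Summable fun n : ℕ => (2 ^ n : ℝ)⁻¹ * ψ (2 ^ n • x) (2 ^ n • y)) (x : X) :
    ‖F x - limit F x‖ ≤ 2⁻¹ * ∑' n : ℕ, (2 ^ n : ℝ)⁻¹ * ψ (2 ^ n • x) (2 ^ n • x) := by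
  have h := dist_le_tsum_of_dist_le_of_tendsto₀ _ (dist_seq_succ_le hF · x)
    ((hψ x x).mul_left 2⁻¹) (tendsto_seq_limit hF hψ x)
  rwa [tsum_mul_left, seq, pow_zero, inv_one, one_smul, pow_zero, one_nsmul, dist_eq_norm] at h

theorem existsUnique_additive_norm_sub_le (hF : ∀ x y, ‖F (x + y) - F x - F y‖ ≤ ψ x y)
    (hψ : ∀ x y, Summable fun n : ℕ => (2 ^ n : ℝ)⁻¹ * ψ (2 ^ n • x) (2 ^ n • y)) :
    ∃! T : X → Y, (∀ x y, T (x + y) = T x + T y) ∧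
      ∀ x, ‖F x - T x‖ ≤ 2⁻¹ * ∑' n : ℕ, (2 ^ n : ℝ)⁻¹ * ψ (2 ^ n • x) (2 ^ n • x) := by
  refine ⟨limit F, ⟨limit_add hF hψ, norm_sub_limit_le hF hψ⟩, fun T ⟨hT, hTF⟩ => ?_⟩
  have hclose (x : X) : ‖T x - limit F x‖ ≤ ∑' n : ℕ, (2 ^ n : ℝ)⁻¹ * ψ (2 ^ n • x) (2 ^ n • x) := by
    have := norm_sub_le_norm_sub_add_norm_sub (T x) (F x) (limit F x)
    rw [norm_sub_rev (T x) (F x)] at this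
    linarith [hTF x, norm_sub_limit_le hF hψ x]
  exact congrArg DFunLike.coe <| addMonoidHom_eq_of_norm_sub_le
    (T₁ := AddMonoidHom.mk' T hT) (T₂ := AddMonoidHom.mk' (limit F) (limit_add hF hψ)) _
    (tendsto_inv_two_pow_mul_tsum (fun z => ψ z z)) hclose

end HyersUlam

section MixedEquation

variable {X Y : Type*} [AddCommGroup X] [Module ℝ X] [NormedAddCommGroup Y] [NormedSpace ℝ Y]

noncomputable def mixedControl (r s t : ℝ) (φ : X → X → ℝ) (x y : X) : ℝ :=
  r⁻¹ * (φ ((r / s) • x) ((r / t) • y) + φ ((r / s) • x) 0 + φ 0 ((r / t) • y))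

lemma norm_add_sub_le_mixedControl {f g h : X → Y} {φ : X → X → ℝ} {r s t : ℝ}
    (hr : 0 < r) (hs : s ≠ 0) (ht : t ≠ 0) (hg0 : g 0 = 0) (hh0 : h 0 = 0)
    (hineq : ∀ x y, ‖r • f (r⁻¹ • (s • x + t • y)) - s • g x - t • h y‖ ≤ φ x y) (x y : X) :
    ‖f (x + y) - f x - f y‖ ≤ mixedControl r s t φ x y := by
  have hsx : s • (r / s) • x = r • x := by rw [smul_smul, mul_div_cancel₀ r hs]
  have hty : t • (r / t) • y = r • y := by rw [smul_smul, mul_div_cancel₀ r ht]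
  have h₁ := hineq ((r / s) • x) ((r / t) • y)
  have h₂ := hineq ((r / s) • x) 0
  have h₃ := hineq 0 ((r / t) • y)
  rw [hsx, hty, ← smul_add, inv_smul_smul₀ hr.ne'] at h₁
  rw [smul_zero, add_zero, hsx, inv_smul_smul₀ hr.ne', hh0, smul_zero, sub_zero] at h₂
  rw [smul_zero, zero_add, hty, inv_smul_smul₀ hr.ne', hg0, smul_zero, sub_zero] at h₃
  have hsplit : r • (f (x + y) - f x - f y)
      = (r • f (x + y) - s • g ((r / s) • x) - t • h ((r / t) • y))
        - (r • f x - s • g ((r / s) • x)) - (r • f y - t • h ((r / t) • y)) := by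
    module
  rw [mixedControl, le_inv_mul_iff₀ hr, ← norm_smul_of_nonneg hr.le, hsplit]
  exact (norm_sub_le _ _).trans (add_le_add ((norm_sub_le _ _).trans (add_le_add h₁ h₂)) h₃)

lemma smul_two_pow_nsmul (c : ℝ) (n : ℕ) (x : X) : c • (2 ^ n • x) = (2 ^ n * c) • x := by
  rw [← Nat.cast_smul_eq_nsmul ℝ, smul_smul, mul_comm, Nat.cast_pow, Nat.cast_two]

end MixedEquation

theorem stmt_0_general {X Y : Type*} [AddCommGroup X] [Module ℝ X]
    [NormedAddCommGroup Y] [NormedSpace ℝ Y] [CompleteSpace Y]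
    (r s t : ℕ) (hr : 0 < r) (hs : 0 < s) (ht : 0 < t)
    (f g h : X → Y) (φ : X → X → ℝ)
    (hg0 : g 0 = 0) (hh0 : h 0 = 0)
    (hsum : ∀ x y : X, Summable (fun n : ℕ =>
      (1 / 2 ^ n : ℝ) * (φ ((2 ^ n * ((r : ℝ) / s)) • x) ((2 ^ n * ((r : ℝ) / t)) • y)
        + φ ((2 ^ n * ((r : ℝ) / s)) • x) 0 + φ 0 ((2 ^ n * ((r : ℝ) / t)) • y))))
    (hineq : ∀ x y : X,
      ‖(r : ℝ) • f (((r : ℝ)⁻¹) • ((s : ℝ) • x + (t : ℝ) • y)) - (s : ℝ) • g x - (t : ℝ) • h y‖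
        ≤ φ x y) :
    ∃! T : X → Y, (∀ x y : X, T (x + y) = T x + T y) ∧
      ∀ x : X, ‖f x - T x‖ ≤ (1 / (2 * r) : ℝ) * ∑' n : ℕ,
        (1 / 2 ^ n : ℝ) * (φ ((2 ^ n * ((r : ℝ) / s)) • x) ((2 ^ n * ((r : ℝ) / t)) • x)
          + φ ((2 ^ n * ((r : ℝ) / s)) • x) 0 + φ 0 ((2 ^ n * ((r : ℝ) / t)) • x)) := by
  have hterm (x y : X) (n : ℕ) :
      (2 ^ n : ℝ)⁻¹ * mixedControl r s t φ (2 ^ n • x) (2 ^ n • y)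
        = (r : ℝ)⁻¹ * ((1 / 2 ^ n : ℝ) * (φ ((2 ^ n * ((r : ℝ) / s)) • x) ((2 ^ n * ((r : ℝ) / t)) • y)
          + φ ((2 ^ n * ((r : ℝ) / s)) • x) 0 + φ 0 ((2 ^ n * ((r : ℝ) / t)) • y))) := by
    simp only [mixedControl, smul_two_pow_nsmul]
    ring
  have hbound (x : X) : (1 / (2 * r) : ℝ) * ∑' n : ℕ,
        (1 / 2 ^ n : ℝ) * (φ ((2 ^ n * ((r : ℝ) / s)) • x) ((2 ^ n * ((r : ℝ) / t)) • x)
          + φ ((2 ^ n * ((r : ℝ) / s)) • x) 0 + φ 0 ((2 ^ n * ((r : ℝ) / t)) • x))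
      = 2⁻¹ * ∑' n : ℕ, (2 ^ n : ℝ)⁻¹ * mixedControl r s t φ (2 ^ n • x) (2 ^ n • x) := by
    rw [tsum_congr (hterm x x), tsum_mul_left]
    ring
  simp only [hbound]
  exact HyersUlam.existsUnique_additive_norm_sub_le
    (norm_add_sub_le_mixedControl (Nat.cast_pos.mpr hr) (Nat.cast_pos.mpr hs).ne'
      (Nat.cast_pos.mpr ht).ne' hg0 hh0 hineq)
    fun x y => ((hsum x y).mul_left _).congr fun n => (hterm x y n).symm

theorem stmt_0 {X Y : Type*} [AddCommGroup X] [Module ℝ X]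
    [NormedAddCommGroup Y] [NormedSpace ℝ Y] [CompleteSpace Y]
    (r s t : ℕ) (hr : 0 < r) (hs : 0 < s) (ht : 0 < t)
    (f g h : X → Y) (φ : X → X → ℝ) (hφ : ∀ x y, 0 ≤ φ x y)
    (hf0 : f 0 = 0) (hg0 : g 0 = 0) (hh0 : h 0 = 0)
    (hsum : ∀ x y : X, Summable (fun n : ℕ =>
      (1 / 2 ^ n : ℝ) * (φ ((2 ^ n * ((r : ℝ) / s)) • x) ((2 ^ n * ((r : ℝ) / t)) • y)
        + φ ((2 ^ n * ((r : ℝ) / s)) • x) 0 + φ 0 ((2 ^ n * ((r : ℝ) / t)) • y))))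
    (hineq : ∀ x y : X,
      ‖(r : ℝ) • f (((r : ℝ)⁻¹) • ((s : ℝ) • x + (t : ℝ) • y)) - (s : ℝ) • g x - (t : ℝ) • h y‖
        ≤ φ x y) :
    ∃! T : X → Y, (∀ x y : X, T (x + y) = T x + T y) ∧
      ∀ x : X, ‖f x - T x‖ ≤ (1 / (2 * r) : ℝ) * ∑' n : ℕ,
        (1 / 2 ^ n : ℝ) * (φ ((2 ^ n * ((r : ℝ) / s)) • x) ((2 ^ n * ((r : ℝ) / t)) • x)
          + φ ((2 ^ n * ((r : ℝ) / s)) • x) 0 + φ 0 ((2 ^ n * ((r : ℝ) / t)) • x)) :=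
  stmt_0_general r s t hr hs ht f g h φ hg0 hh0 hsum hineq
end

section
/- Let X be a real linear space, Y a real Banach space, and r, s, t positive integers. Under the hypotheses of the generalized Jensen stability theorem (f(0)=g(0)=h(0)=0, ‖r·f((s·x+t·y)/r) − s·g(x) − t·h(y)‖ ≤ φ(x,y) with φ̃ < ∞), the unique additive map T satisfying ‖f(x) − T(x)‖ ≤ φ̃(x,x) also satisfies ‖g(x) − T(x)‖ ≤ (1/s)·φ(x, 0) + (r/s)·φ̃((s/r)x, (s/r)x) for all x ∈ X. -/
/-! Put `v = (s/r) x`. The Jensen inequality at `(x, 0)` compares `r f(v)` with `s g(x)` up to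
`φ(x, 0)`, the stability estimate compares `f(v)` with `T(v)`, and additivity gives
`T(v) = (s/r) T(x)`; the triangle inequality then combines the two estimates. -/

lemma norm_sub_div_smul_le {E : Type*} [SeminormedAddCommGroup E] [NormedSpace ℝ E]
    {r s A B : ℝ} (hr : 0 ≤ r) (hs : 0 < s) {a b c : E}
    (hab : ‖r • a - s • b‖ ≤ A) (hac : ‖a - c‖ ≤ B) :
    ‖b - (r / s) • c‖ ≤ 1 / s * A + r / s * B := by
  have hdecomp : b - (r / s) • c = (1 / s) • (s • b - r • a) + (r / s) • (a - c) := by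
    match_scalars <;> field_simp; ring
  calc ‖b - (r / s) • c‖
      ≤ ‖(1 / s) • (s • b - r • a)‖ + ‖(r / s) • (a - c)‖ := hdecomp ▸ norm_add_le _ _
    _ = 1 / s * ‖r • a - s • b‖ + r / s * ‖a - c‖ := by
      rw [norm_smul, norm_smul, norm_sub_rev (s • b), Real.norm_of_nonneg (by positivity),
        Real.norm_of_nonneg (by positivity)]
    _ ≤ 1 / s * A + r / s * B := by gcongr

theorem stmt_1_general {X Y : Type*} [AddCommGroup X] [Module ℝ X]
    [NormedAddCommGroup Y] [NormedSpace ℝ Y]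
    (r s t : ℕ) (hr : 0 < r) (hs : 0 < s)
    (f g h : X → Y) (φ : X → X → ℝ)
    (hh0 : h 0 = 0)
    (hineq : ∀ x y : X,
      ‖(r : ℝ) • f (((r : ℝ)⁻¹) • ((s : ℝ) • x + (t : ℝ) • y)) - (s : ℝ) • g x - (t : ℝ) • h y‖
        ≤ φ x y)
    (T : X → Y) (hTadd : ∀ x y : X, T (x + y) = T x + T y)
    (hfT : ∀ x : X, ‖f x - T x‖ ≤ (1 / (2 * r) : ℝ) * ∑' n : ℕ,
      (1 / 2 ^ n : ℝ) * (φ ((2 ^ n * ((r : ℝ) / s)) • x) ((2 ^ n * ((r : ℝ) / t)) • x)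
        + φ ((2 ^ n * ((r : ℝ) / s)) • x) 0 + φ 0 ((2 ^ n * ((r : ℝ) / t)) • x))) :
    ∀ x : X, ‖g x - T x‖ ≤ (1 / s : ℝ) * φ x 0 + ((r : ℝ) / s) *
      ((1 / (2 * r) : ℝ) * ∑' n : ℕ,
        (1 / 2 ^ n : ℝ) * (φ ((2 ^ n * ((r : ℝ) / s)) • (((s : ℝ) / r) • x))
              ((2 ^ n * ((r : ℝ) / t)) • (((s : ℝ) / r) • x))
          + φ ((2 ^ n * ((r : ℝ) / s)) • (((s : ℝ) / r) • x)) 0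
          + φ 0 ((2 ^ n * ((r : ℝ) / t)) • (((s : ℝ) / r) • x)))) := by
  intro x
  have hr0 : (r : ℝ) ≠ 0 := by positivity
  have hs0 : (s : ℝ) ≠ 0 := by positivity
  have hjensen : ‖(r : ℝ) • f (((s : ℝ) / r) • x) - (s : ℝ) • g x‖ ≤ φ x 0 := by
    simpa [hh0, smul_smul, inv_mul_eq_div] using hineq x 0
  have hTv : T (((s : ℝ) / r) • x) = ((s : ℝ) / r) • T x := by
    simpa using map_ratCast_smul (AddMonoidHom.mk' T hTadd) ℝ ℝ ((s : ℚ) / r) x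
  have hTx : T x = ((r : ℝ) / s) • T (((s : ℝ) / r) • x) := by
    rw [hTv, smul_smul, div_mul_div_cancel₀ hs0, div_self hr0, one_smul]
  rw [hTx]
  exact norm_sub_div_smul_le (Nat.cast_nonneg r) (by positivity) hjensen (hfT _)

theorem stmt_1 {X Y : Type*} [AddCommGroup X] [Module ℝ X]
    [NormedAddCommGroup Y] [NormedSpace ℝ Y] [CompleteSpace Y]
    (r s t : ℕ) (hr : 0 < r) (hs : 0 < s) (ht : 0 < t)
    (f g h : X → Y) (φ : X → X → ℝ) (hφ : ∀ x y, 0 ≤ φ x y)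
    (hf0 : f 0 = 0) (hg0 : g 0 = 0) (hh0 : h 0 = 0)
    (hsum : ∀ x y : X, Summable (fun n : ℕ =>
      (1 / 2 ^ n : ℝ) * (φ ((2 ^ n * ((r : ℝ) / s)) • x) ((2 ^ n * ((r : ℝ) / t)) • y)
        + φ ((2 ^ n * ((r : ℝ) / s)) • x) 0 + φ 0 ((2 ^ n * ((r : ℝ) / t)) • y))))
    (hineq : ∀ x y : X,
      ‖(r : ℝ) • f (((r : ℝ)⁻¹) • ((s : ℝ) • x + (t : ℝ) • y)) - (s : ℝ) • g x - (t : ℝ) • h y‖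
        ≤ φ x y)
    (T : X → Y) (hTadd : ∀ x y : X, T (x + y) = T x + T y)
    (hfT : ∀ x : X, ‖f x - T x‖ ≤ (1 / (2 * r) : ℝ) * ∑' n : ℕ,
      (1 / 2 ^ n : ℝ) * (φ ((2 ^ n * ((r : ℝ) / s)) • x) ((2 ^ n * ((r : ℝ) / t)) • x)
        + φ ((2 ^ n * ((r : ℝ) / s)) • x) 0 + φ 0 ((2 ^ n * ((r : ℝ) / t)) • x))) :
    ∀ x : X, ‖g x - T x‖ ≤ (1 / s : ℝ) * φ x 0 + ((r : ℝ) / s) *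
      ((1 / (2 * r) : ℝ) * ∑' n : ℕ,
        (1 / 2 ^ n : ℝ) * (φ ((2 ^ n * ((r : ℝ) / s)) • (((s : ℝ) / r) • x))
              ((2 ^ n * ((r : ℝ) / t)) • (((s : ℝ) / r) • x))
          + φ ((2 ^ n * ((r : ℝ) / s)) • (((s : ℝ) / r) • x)) 0
          + φ 0 ((2 ^ n * ((r : ℝ) / t)) • (((s : ℝ) / r) • x)))) :=
  stmt_1_general r s t hr hs f g h φ hh0 hineq T hTadd hfT
end

section
/- Let X be a real normed space, Y a real Banach space, r, s, t positive integers, ε, δ ≥ 0, and p ∈ [0, 1). If f : X → Y satisfies f(0) = 0 and ‖r·f((s·x + t·y)/r) − s·f(x) − t·f(y)‖ ≤ ε + δ(‖x‖^p + ‖y‖^p) for all x, y ∈ X, then there exists a unique additive map T : X → Y such that ‖f(x) − T(x)‖ ≤ (3/r)ε + (1/r)·[(r/s)^p + (r/t)^p]·(2δ‖x‖^p)/(1 − 2^{p−1}) for all x ∈ X. -/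
open Filter Topology

/-!
Substituting `(x, y) = ((r/s)u, (r/t)u)`, `((r/s)u, 0)` and `(0, (r/t)u)` in the hypothesis and
combining the three defects bounds `‖f (2u) - 2 f u‖` by `3ε/r + (3δ/r)((r/s)^p + (r/t)^p)‖u‖^p`.
Hyers' direct method then yields `T x = lim 2⁻ⁿ f (2ⁿ x)`: consecutive terms differ by a geometric
series of ratio `1/2` and `2^(p-1) < 1`, and summing it bounds `‖f x - T x‖`. Rescaling the
hypothesis at `2ⁿ x, 2ⁿ y` shows the defect of `T` is `O(2^(n(p-1)))`, so `T` satisfies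
`r T((s u + t v)/r) = s T u + t T v` exactly, which together with `T 0 = 0` forces additivity.
Two additive maps within `A + B‖x‖^p` of `f` coincide, since `T x = 2⁻ⁿ T (2ⁿ x)` for additive `T`.
-/

lemma inv_two_pow_mul_add_rpow (A B p : ℝ) (n : ℕ) :
    ((2 : ℝ) ^ n)⁻¹ * (A + B * ((2 : ℝ) ^ n) ^ p)
      = A * (1 / 2) ^ n + B * ((2 : ℝ) ^ (p - 1)) ^ n := by
  have h : ((2 : ℝ) ^ n) ^ p = ((2 : ℝ) ^ p) ^ n := by
    rw [← Real.rpow_natCast, ← Real.rpow_natCast, ← Real.rpow_mul zero_le_two,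
      ← Real.rpow_mul zero_le_two, mul_comm]
  rw [h, Real.rpow_sub two_pos, Real.rpow_one, div_pow, div_pow, one_pow]
  field_simp

lemma tendsto_inv_two_pow_mul_add_rpow {p : ℝ} (hp : p < 1) (A B : ℝ) :
    Tendsto (fun n : ℕ => ((2 : ℝ) ^ n)⁻¹ * (A + B * ((2 : ℝ) ^ n) ^ p)) atTop (𝓝 0) := by
  have hq : (2 : ℝ) ^ (p - 1) < 1 := Real.rpow_lt_one_of_one_lt_of_neg one_lt_two (by linarith)
  simp_rw [inv_two_pow_mul_add_rpow]
  have hhalf := tendsto_pow_atTop_nhds_zero_of_lt_one (r := (1 / 2 : ℝ)) (by norm_num) (by norm_num)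
  simpa using (hhalf.const_mul A).add
    ((tendsto_pow_atTop_nhds_zero_of_lt_one (by positivity) hq).const_mul B)

section Additive

variable {X Y : Type*} [AddCommGroup X] [Module ℝ X] [AddCommGroup Y] [Module ℝ Y]

lemma map_two_pow_smul_of_map_add {φ : X → Y} (hφ : ∀ x y, φ (x + y) = φ x + φ y) (n : ℕ)
    (x : X) :
    φ ((2 : ℝ) ^ n • x) = (2 : ℝ) ^ n • φ x := by
  have h := map_nsmul (AddMonoidHom.mk' φ hφ) (2 ^ n) x
  simp only [AddMonoidHom.mk'_apply, ← Nat.cast_smul_eq_nsmul ℝ, Nat.cast_pow, Nat.cast_ofNat] at h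
  exact h

lemma map_add_of_smul_map_inv_smul_add {T : X → Y} {r s t : ℝ} (hr : r ≠ 0) (hs : s ≠ 0)
    (ht : t ≠ 0) (h0 : T 0 = 0)
    (h : ∀ u v, r • T (r⁻¹ • (s • u + t • v)) = s • T u + t • T v) (x y : X) :
    T (x + y) = T x + T y := by
  have hx : s • T ((r / s) • x) = r • T x := by
    have := h ((r / s) • x) 0
    rwa [smul_zero, add_zero, h0, smul_zero, add_zero, smul_smul s, mul_div_cancel₀ r hs,
      inv_smul_smul₀ hr, eq_comm] at this
  have hy : t • T ((r / t) • y) = r • T y := by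
    have := h 0 ((r / t) • y)
    rwa [smul_zero, zero_add, h0, smul_zero, zero_add, smul_smul t, mul_div_cancel₀ r ht,
      inv_smul_smul₀ hr, eq_comm] at this
  have hxy := h ((r / s) • x) ((r / t) • y)
  rw [hx, hy, smul_smul, smul_smul, mul_div_cancel₀ r hs, mul_div_cancel₀ r ht, ← smul_add,
    inv_smul_smul₀ hr, ← smul_add] at hxy
  exact smul_right_injective Y hr hxy

end Additive

section Normed

variable {X Y : Type*} [NormedAddCommGroup X] [NormedSpace ℝ X] [NormedAddCommGroup Y]
  [NormedSpace ℝ Y]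

lemma norm_smul_rpow_of_nonneg {c : ℝ} (hc : 0 ≤ c) (x : X) (p : ℝ) :
    ‖c • x‖ ^ p = c ^ p * ‖x‖ ^ p := by
  rw [norm_smul, Real.norm_of_nonneg hc, Real.mul_rpow hc (norm_nonneg x)]

lemma eq_zero_of_map_add_of_norm_le_rpow {φ : X → Y} (hφ : ∀ x y, φ (x + y) = φ x + φ y)
    {A B p : ℝ} (hp : p < 1) (hbound : ∀ x, ‖φ x‖ ≤ A + B * ‖x‖ ^ p) : φ = 0 := by
  funext x
  have hle : ∀ n : ℕ, ‖φ x‖ ≤ ((2 : ℝ) ^ n)⁻¹ * (A + B * ‖x‖ ^ p * ((2 : ℝ) ^ n) ^ p) := by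
    intro n
    have h2n : (0 : ℝ) < 2 ^ n := by positivity
    have h := hbound ((2 : ℝ) ^ n • x)
    rw [map_two_pow_smul_of_map_add hφ, norm_smul, norm_smul_rpow_of_nonneg h2n.le,
      Real.norm_of_nonneg h2n.le] at h
    rw [le_inv_mul_iff₀ h2n]
    linarith
  exact norm_le_zero_iff.mp (ge_of_tendsto' (tendsto_inv_two_pow_mul_add_rpow hp _ _) hle)

lemma eq_of_map_add_of_norm_sub_le_rpow {f T₁ T₂ : X → Y}
    (h₁ : ∀ x y, T₁ (x + y) = T₁ x + T₁ y) (h₂ : ∀ x y, T₂ (x + y) = T₂ x + T₂ y)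
    {A B p : ℝ} (hp : p < 1) (hb₁ : ∀ x, ‖f x - T₁ x‖ ≤ A + B * ‖x‖ ^ p)
    (hb₂ : ∀ x, ‖f x - T₂ x‖ ≤ A + B * ‖x‖ ^ p) : T₁ = T₂ := by
  have h := eq_zero_of_map_add_of_norm_le_rpow (φ := T₁ - T₂) (A := 2 * A) (B := 2 * B)
    (fun x y => by simp only [Pi.sub_apply, h₁, h₂]; abel) hp fun x => by
      have := norm_sub_le (f x - T₂ x) (f x - T₁ x)
      rw [sub_sub_sub_cancel_left] at this
      simp only [Pi.sub_apply]
      linarith [hb₁ x, hb₂ x]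
  exact sub_eq_zero.mp h

lemma exists_tendsto_inv_two_pow_smul_of_norm_sub_two_smul_le [CompleteSpace Y] {f : X → Y}
    {a b p : ℝ} (hp : p < 1) (h : ∀ x, ‖f ((2 : ℝ) • x) - (2 : ℝ) • f x‖ ≤ a + b * ‖x‖ ^ p) :
    ∃ T : X → Y, (∀ x, Tendsto (fun n : ℕ => ((2 : ℝ) ^ n)⁻¹ • f ((2 : ℝ) ^ n • x)) atTop
      (𝓝 (T x))) ∧ ∀ x, ‖f x - T x‖ ≤ a + b * ‖x‖ ^ p / (2 - 2 ^ p) := by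
  have h2q : (2 : ℝ) ^ p = 2 * 2 ^ (p - 1) := by rw [Real.rpow_sub_one two_ne_zero]; ring
  set q : ℝ := 2 ^ (p - 1)
  have hq : q < 1 := Real.rpow_lt_one_of_one_lt_of_neg one_lt_two (by linarith)
  let g : X → ℕ → Y := fun x n => ((2 : ℝ) ^ n)⁻¹ • f ((2 : ℝ) ^ n • x)
  let d : X → ℕ → ℝ := fun x n => 2⁻¹ * (a * (1 / 2) ^ n + b * ‖x‖ ^ p * q ^ n)
  have hstep : ∀ x n, dist (g x n) (g x (n + 1)) ≤ d x n := by
    intro x n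
    have h2n : (0 : ℝ) < 2 ^ n := by positivity
    have hdiff : g x (n + 1) - g x n = (2 : ℝ)⁻¹ • ((2 : ℝ) ^ n)⁻¹ •
        (f ((2 : ℝ) • (2 : ℝ) ^ n • x) - (2 : ℝ) • f ((2 : ℝ) ^ n • x)) := by
      rw [smul_smul (2 : ℝ), ← pow_succ']
      module
    have hbound := h ((2 : ℝ) ^ n • x)
    rw [norm_smul_rpow_of_nonneg h2n.le] at hbound
    rw [dist_comm, dist_eq_norm, hdiff, norm_smul, norm_smul, Real.norm_of_nonneg (by norm_num),
      Real.norm_of_nonneg (inv_nonneg.mpr h2n.le)]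
    calc _ ≤ (2 : ℝ)⁻¹ * (((2 : ℝ) ^ n)⁻¹ * (a + b * ‖x‖ ^ p * ((2 : ℝ) ^ n) ^ p)) := by
          gcongr; linarith
      _ = d x n := by rw [inv_two_pow_mul_add_rpow]
  have hsum : ∀ x, HasSum (d x) (a + b * ‖x‖ ^ p / (2 - 2 ^ p)) := by
    intro x
    have := ((hasSum_geometric_two.mul_left a).add
      ((hasSum_geometric_of_lt_one (by positivity) hq).mul_left (b * ‖x‖ ^ p))).mul_left 2⁻¹
    have hq' : 0 < 1 - q := by linarith
    rwa [h2q, show a + b * ‖x‖ ^ p / (2 - 2 * q) = 2⁻¹ * (a * 2 + b * ‖x‖ ^ p * (1 - q)⁻¹) by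
      field_simp]
  choose T hT using fun x => cauchySeq_tendsto_of_complete
    (cauchySeq_of_dist_le_of_summable (d x) (hstep x) (hsum x).summable)
  refine ⟨T, hT, fun x => ?_⟩
  have := dist_le_tsum_of_dist_le_of_tendsto₀ (d x) (hstep x) (hsum x).summable (hT x)
  simpa [g, dist_eq_norm, (hsum x).tsum_eq] using this

lemma norm_sub_two_smul_le_of_norm_smul_comb_le {f : X → Y} {r s t ε δ p : ℝ} (hr : 0 < r)
    (hs : 0 < s) (ht : 0 < t) (hδ : 0 ≤ δ) (hp : 0 ≤ p) (hf0 : f 0 = 0)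
    (hineq : ∀ x y : X, ‖r • f (r⁻¹ • (s • x + t • y)) - s • f x - t • f y‖
      ≤ ε + δ * (‖x‖ ^ p + ‖y‖ ^ p)) (u : X) :
    ‖f ((2 : ℝ) • u) - (2 : ℝ) • f u‖
      ≤ 3 / r * ε + 3 / r * δ * ((r / s) ^ p + (r / t) ^ p) * ‖u‖ ^ p := by
  set u₁ := (r / s) • u
  set u₂ := (r / t) • u
  have e₁ : s • u₁ = r • u := by rw [smul_smul, mul_div_cancel₀ r hs.ne']
  have e₂ : t • u₂ = r • u := by rw [smul_smul, mul_div_cancel₀ r ht.ne']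
  have h₁ := hineq u₁ u₂
  rw [e₁, e₂, ← two_smul ℝ (r • u), smul_comm, inv_smul_smul₀ hr.ne'] at h₁
  have h₂ := hineq u₁ 0
  rw [smul_zero, add_zero, e₁, inv_smul_smul₀ hr.ne', hf0, smul_zero, sub_zero] at h₂
  have h₃ := hineq 0 u₂
  rw [smul_zero, zero_add, e₂, inv_smul_smul₀ hr.ne', hf0, smul_zero, sub_zero] at h₃
  -- `‖0‖ ^ p` is `1` when `p = 0`, so it cannot simply be dropped.
  have hz : ∀ v : X, δ * ‖(0 : X)‖ ^ p ≤ δ * ‖v‖ ^ p := fun v =>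
    mul_le_mul_of_nonneg_left
      (Real.rpow_le_rpow (norm_nonneg _) (by rw [norm_zero]; exact norm_nonneg v) hp) hδ
  have hz₁ := hz u₁
  have hz₂ := hz u₂
  have htri : r * ‖f ((2 : ℝ) • u) - (2 : ℝ) • f u‖
      ≤ ‖r • f ((2 : ℝ) • u) - s • f u₁ - t • f u₂‖ + ‖r • f u - s • f u₁‖
        + ‖r • f u - t • f u₂‖ := by
    have hsplit : r • (f ((2 : ℝ) • u) - (2 : ℝ) • f u)
        = (r • f ((2 : ℝ) • u) - s • f u₁ - t • f u₂) - (r • f u - s • f u₁)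
          - (r • f u - t • f u₂) := by module
    calc r * ‖f ((2 : ℝ) • u) - (2 : ℝ) • f u‖
        = ‖r • (f ((2 : ℝ) • u) - (2 : ℝ) • f u)‖ := by
          rw [norm_smul, Real.norm_of_nonneg hr.le]
      _ ≤ _ := by
        rw [hsplit]
        exact (norm_sub_le _ _).trans (add_le_add_left (norm_sub_le _ _) _)
  rw [norm_smul_rpow_of_nonneg (div_pos hr hs).le] at h₁ h₂ hz₁
  rw [norm_smul_rpow_of_nonneg (div_pos hr ht).le] at h₁ h₃ hz₂
  rw [← le_div_iff₀' hr] at htri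
  calc _ ≤ _ := htri
    _ ≤ (3 * ε + 3 * δ * ((r / s) ^ p + (r / t) ^ p) * ‖u‖ ^ p) / r := by
      gcongr ?_ / r; linarith
    _ = _ := by ring

lemma smul_map_inv_smul_add_eq_of_tendsto {f T : X → Y} {r s t ε δ p : ℝ} (hp : p < 1)
    (hineq : ∀ x y : X, ‖r • f (r⁻¹ • (s • x + t • y)) - s • f x - t • f y‖
      ≤ ε + δ * (‖x‖ ^ p + ‖y‖ ^ p))
    (hT : ∀ x, Tendsto (fun n : ℕ => ((2 : ℝ) ^ n)⁻¹ • f ((2 : ℝ) ^ n • x)) atTop (𝓝 (T x)))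
    (u v : X) : r • T (r⁻¹ • (s • u + t • v)) = s • T u + t • T v := by
  set w := r⁻¹ • (s • u + t • v)
  set g : X → ℕ → Y := fun x n => ((2 : ℝ) ^ n)⁻¹ • f ((2 : ℝ) ^ n • x)
  have hlim : Tendsto (fun n => r • g w n - s • g u n - t • g v n) atTop
      (𝓝 (r • T w - s • T u - t • T v)) :=
    (((hT w).const_smul r).sub ((hT u).const_smul s)).sub ((hT v).const_smul t)
  have hle : ∀ n : ℕ, ‖r • g w n - s • g u n - t • g v n‖
      ≤ ((2 : ℝ) ^ n)⁻¹ * (ε + δ * (‖u‖ ^ p + ‖v‖ ^ p) * ((2 : ℝ) ^ n) ^ p) := by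
    intro n
    have h2n : (0 : ℝ) < 2 ^ n := by positivity
    have hw : (2 : ℝ) ^ n • w = r⁻¹ • (s • (2 : ℝ) ^ n • u + t • (2 : ℝ) ^ n • v) := by
      simp only [w, smul_add, smul_comm ((2 : ℝ) ^ n)]
    have hcomb : r • g w n - s • g u n - t • g v n = ((2 : ℝ) ^ n)⁻¹ •
        (r • f (r⁻¹ • (s • (2 : ℝ) ^ n • u + t • (2 : ℝ) ^ n • v)) - s • f ((2 : ℝ) ^ n • u)
          - t • f ((2 : ℝ) ^ n • v)) := by
      simp only [g, ← hw]
      module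
    have hbound := hineq ((2 : ℝ) ^ n • u) ((2 : ℝ) ^ n • v)
    rw [norm_smul_rpow_of_nonneg h2n.le, norm_smul_rpow_of_nonneg h2n.le] at hbound
    rw [hcomb, norm_smul, Real.norm_of_nonneg (inv_nonneg.mpr h2n.le)]
    gcongr
    linarith
  have hzero := norm_le_zero_iff.mp
    (le_of_tendsto_of_tendsto' hlim.norm (tendsto_inv_two_pow_mul_add_rpow hp _ _) hle)
  rwa [sub_sub, sub_eq_zero] at hzero

end Normed

theorem stmt_2_general {X Y : Type*} [NormedAddCommGroup X] [NormedSpace ℝ X]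
    [NormedAddCommGroup Y] [NormedSpace ℝ Y] [CompleteSpace Y]
    (r s t : ℕ) (hr : 0 < r) (hs : 0 < s) (ht : 0 < t)
    (ε δ : ℝ) (hδ : 0 ≤ δ) (p : ℝ) (hp0 : 0 ≤ p) (hp1 : p < 1)
    (f : X → Y) (hf0 : f 0 = 0)
    (hineq : ∀ x y : X,
      ‖(r : ℝ) • f (((r : ℝ)⁻¹) • ((s : ℝ) • x + (t : ℝ) • y)) - (s : ℝ) • f x - (t : ℝ) • f y‖
        ≤ ε + δ * (‖x‖ ^ p + ‖y‖ ^ p)) :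
    ∃! T : X → Y, (∀ x y : X, T (x + y) = T x + T y) ∧
      ∀ x : X, ‖f x - T x‖ ≤ (3 / r : ℝ) * ε
        + (1 / r : ℝ) * (((r : ℝ) / s) ^ p + ((r : ℝ) / t) ^ p) *
          (2 * δ * ‖x‖ ^ p / (1 - (2 : ℝ) ^ (p - 1))) := by
  have hr' : (0 : ℝ) < r := Nat.cast_pos.mpr hr
  have hs' : (0 : ℝ) < s := Nat.cast_pos.mpr hs
  have ht' : (0 : ℝ) < t := Nat.cast_pos.mpr ht
  obtain ⟨T, hT, hfT⟩ := exists_tendsto_inv_two_pow_smul_of_norm_sub_two_smul_le hp1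
    (norm_sub_two_smul_le_of_norm_smul_comb_le hr' hs' ht' hδ hp0 hf0 hineq)
  have hT0 : T 0 = 0 := tendsto_nhds_unique (hT 0) (by simp [hf0])
  have hTadd := map_add_of_smul_map_inv_smul_add hr'.ne' hs'.ne' ht'.ne' hT0
    (smul_map_inv_smul_add_eq_of_tendsto hp1 hineq hT)
  have h2q : (2 : ℝ) ^ p = 2 * 2 ^ (p - 1) := by rw [Real.rpow_sub_one two_ne_zero]; ring
  set M := ((r : ℝ) / s) ^ p + ((r : ℝ) / t) ^ p
  set q : ℝ := 2 ^ (p - 1)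
  have hq : q < 1 := Real.rpow_lt_one_of_one_lt_of_neg one_lt_two (by linarith)
  have hbound : ∀ x, ‖f x - T x‖ ≤ 3 / r * ε + 1 / r * M * (2 * δ * ‖x‖ ^ p / (1 - q)) := by
    intro x
    have hc : 0 ≤ δ * M * ‖x‖ ^ p / (r * (1 - q)) := by
      have : 0 < 1 - q := by linarith
      positivity
    calc _ ≤ _ := hfT x
      _ = 3 / r * ε + 3 / 2 * (δ * M * ‖x‖ ^ p / (r * (1 - q))) := by
        rw [h2q]; field_simp
      _ ≤ 3 / r * ε + 2 * (δ * M * ‖x‖ ^ p / (r * (1 - q))) := by linarith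
      _ = _ := by field_simp
  refine ⟨T, ⟨hTadd, hbound⟩, fun T' ⟨hT'add, hbound'⟩ => ?_⟩
  exact eq_of_map_add_of_norm_sub_le_rpow hT'add hTadd (A := 3 / r * ε)
    (B := 1 / r * M * (2 * δ / (1 - q))) hp1
    (fun x => (hbound' x).trans_eq (by ring)) (fun x => (hbound x).trans_eq (by ring))

theorem stmt_2 {X Y : Type*} [NormedAddCommGroup X] [NormedSpace ℝ X]
    [NormedAddCommGroup Y] [NormedSpace ℝ Y] [CompleteSpace Y]
    (r s t : ℕ) (hr : 0 < r) (hs : 0 < s) (ht : 0 < t)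
    (ε δ : ℝ) (hε : 0 ≤ ε) (hδ : 0 ≤ δ) (p : ℝ) (hp0 : 0 ≤ p) (hp1 : p < 1)
    (f : X → Y) (hf0 : f 0 = 0)
    (hineq : ∀ x y : X,
      ‖(r : ℝ) • f (((r : ℝ)⁻¹) • ((s : ℝ) • x + (t : ℝ) • y)) - (s : ℝ) • f x - (t : ℝ) • f y‖
        ≤ ε + δ * (‖x‖ ^ p + ‖y‖ ^ p)) :
    ∃! T : X → Y, (∀ x y : X, T (x + y) = T x + T y) ∧
      ∀ x : X, ‖f x - T x‖ ≤ (3 / r : ℝ) * ε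
        + (1 / r : ℝ) * (((r : ℝ) / s) ^ p + ((r : ℝ) / t) ^ p) *
          (2 * δ * ‖x‖ ^ p / (1 - (2 : ℝ) ^ (p - 1))) :=
  stmt_2_general r s t hr hs ht ε δ hδ p hp0 hp1 f hf0 hineq
end

section
/- Let X be a real normed space, Y a real Banach space, r, s, t positive integers, d > 0 and ε > 0. If f : X → Y satisfies f(0) = 0 and ‖r·f((s·x + t·y)/r) − s·f(x) − t·f(y)‖ ≤ ε for all x, y ∈ X with ‖x‖ + ‖y‖ ≥ d, then the inequality ‖r·f((s·x + t·y)/r) − s·f(x) − t·f(y)‖ ≤ 5ε holds for all x, y ∈ X (without restriction). -/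
theorem stmt_3 {X Y : Type*} [NormedAddCommGroup X] [NormedSpace ℝ X]
    [NormedAddCommGroup Y] [NormedSpace ℝ Y] [CompleteSpace Y]
    (r s t : ℕ) (hr : 0 < r) (hs : 0 < s) (ht : 0 < t)
    (d ε : ℝ) (hd : 0 < d) (hε : 0 < ε)
    (f : X → Y) (hf0 : f 0 = 0)
    (hineq : ∀ x y : X, d ≤ ‖x‖ + ‖y‖ →
      ‖(r : ℝ) • f (((r : ℝ)⁻¹) • ((s : ℝ) • x + (t : ℝ) • y)) - (s : ℝ) • f x - (t : ℝ) • f y‖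
        ≤ ε) :
    ∀ x y : X,
      ‖(r : ℝ) • f (((r : ℝ)⁻¹) • ((s : ℝ) • x + (t : ℝ) • y)) - (s : ℝ) • f x - (t : ℝ) • f y‖
        ≤ 5 * ε := by
  intro x y
  have hs' : (0:ℝ) < s := by exact_mod_cast hs
  have ht' : (0:ℝ) < t := by exact_mod_cast ht
  set g : X → X → Y := fun a b =>
    (r : ℝ) • f (((r : ℝ)⁻¹) • ((s : ℝ) • a + (t : ℝ) • b)) - (s : ℝ) • f a - (t : ℝ) • f b
    with hgdef
  have hg : ∀ a b : X, d ≤ ‖a‖ + ‖b‖ → ‖g a b‖ ≤ ε := hineq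
  show ‖g x y‖ ≤ 5 * ε
  clear_value g
  by_cases hxy : x = 0 ∧ y = 0
  · obtain ⟨hx, hy⟩ := hxy
    have h0 : g x y = 0 := by simp [hgdef, hx, hy, hf0]
    rw [h0, norm_zero]; positivity
  · have hv : ∃ v : X, v ≠ 0 := by
      rcases not_and_or.mp hxy with h | h
      exacts [⟨x, h⟩, ⟨y, h⟩]
    obtain ⟨v, hv0⟩ := hv
    set M : ℝ := d + ‖x‖ + ‖y‖ with hM
    have hM0 : 0 < M := by positivity
    clear_value M
    set z : X := (M / ‖v‖) • v with hz
    have hznorm : ‖z‖ = M := by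
      rw [hz, norm_smul, norm_div, Real.norm_eq_abs, abs_of_pos hM0, norm_norm,
        div_mul_cancel₀]
      exact norm_ne_zero_iff.mpr hv0
    clear_value z
    set a0 : X := (s:ℝ)⁻¹ • (((s:ℝ)+(t:ℝ)) • z + (t:ℝ) • y) with ha0
    set b0 : X := (t:ℝ)⁻¹ • ((s:ℝ) • x - ((s:ℝ)+(t:ℝ)) • z) with hb0
    have hsa0 : (s:ℝ) • a0 = ((s:ℝ)+(t:ℝ)) • z + (t:ℝ) • y := by
      rw [ha0, smul_inv_smul₀ hs'.ne']
    have htb0 : (t:ℝ) • b0 = (s:ℝ) • x - ((s:ℝ)+(t:ℝ)) • z := by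
      rw [hb0, smul_inv_smul₀ ht'.ne']
    clear_value a0 b0
    have e1 : (s:ℝ) • a0 + (t:ℝ) • (-z) = (s:ℝ) • z + (t:ℝ) • y := by
      rw [hsa0]; module
    have e2 : (s:ℝ) • z + (t:ℝ) • b0 = (s:ℝ) • x + (t:ℝ) • (-z) := by
      rw [htb0]; module
    have e3 : (s:ℝ) • a0 + (t:ℝ) • b0 = (s:ℝ) • x + (t:ℝ) • y := by
      rw [hsa0, htb0]; module
    have key : g x y = g x (-z) + g z y + g a0 b0 - g a0 (-z) - g z b0 := by
      simp only [hgdef]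
      rw [e1, e2, e3]
      abel
    have hyn : ‖y‖ ≤ M := by rw [hM]; linarith [norm_nonneg x, hd]
    have hdM : d ≤ M := by rw [hM]; linarith [norm_nonneg x, norm_nonneg y]
    -- lower bound for ‖a0‖
    have hAeq : (s:ℝ) * ‖a0‖ = ‖((s:ℝ)+(t:ℝ)) • z + (t:ℝ) • y‖ := by
      calc (s:ℝ) * ‖a0‖ = ‖(s:ℝ)‖ * ‖a0‖ := by rw [Real.norm_eq_abs, abs_of_pos hs']
        _ = ‖(s:ℝ) • a0‖ := (norm_smul _ _).symm
        _ = ‖((s:ℝ)+(t:ℝ)) • z + (t:ℝ) • y‖ := by rw [hsa0]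
    have hC : ‖((s:ℝ)+(t:ℝ)) • z‖ ≤ ‖((s:ℝ)+(t:ℝ)) • z + (t:ℝ) • y‖ + ‖(t:ℝ) • y‖ := by
      calc ‖((s:ℝ)+(t:ℝ)) • z‖
          = ‖(((s:ℝ)+(t:ℝ)) • z + (t:ℝ) • y) - (t:ℝ) • y‖ := by rw [add_sub_cancel_right]
        _ ≤ ‖((s:ℝ)+(t:ℝ)) • z + (t:ℝ) • y‖ + ‖(t:ℝ) • y‖ := norm_sub_le _ _
    have hCz : ‖((s:ℝ)+(t:ℝ)) • z‖ = ((s:ℝ)+(t:ℝ)) * M := by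
      rw [norm_smul, Real.norm_eq_abs, abs_of_pos (by positivity), hznorm]
    have hCy : ‖(t:ℝ) • y‖ = (t:ℝ) * ‖y‖ := by
      rw [norm_smul, Real.norm_eq_abs, abs_of_pos ht']
    have ha0d : d ≤ ‖a0‖ := by
      have h1 : (s:ℝ) * ‖a0‖ ≥ ((s:ℝ)+(t:ℝ)) * M - (t:ℝ) * ‖y‖ := by
        rw [hAeq]; rw [hCz, hCy] at hC; linarith
      nlinarith [mul_nonneg hs'.le (sub_nonneg.mpr hdM), mul_nonneg ht'.le (sub_nonneg.mpr hyn), h1, hs']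
    have h1 : ‖g x (-z)‖ ≤ ε := by
      refine hg _ _ ?_; rw [norm_neg, hznorm]; linarith [norm_nonneg x, hdM]
    have h2 : ‖g z y‖ ≤ ε := by
      refine hg _ _ ?_; rw [hznorm]; linarith [norm_nonneg y, hdM]
    have h3 : ‖g a0 b0‖ ≤ ε := by
      refine hg _ _ ?_; linarith [norm_nonneg b0, ha0d]
    have h4 : ‖g a0 (-z)‖ ≤ ε := by
      refine hg _ _ ?_; rw [norm_neg, hznorm]; linarith [norm_nonneg a0, hdM]
    have h5 : ‖g z b0‖ ≤ ε := by
      refine hg _ _ ?_; rw [hznorm]; linarith [norm_nonneg b0, hdM]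
    calc ‖g x y‖ = ‖g x (-z) + g z y + g a0 b0 - g a0 (-z) - g z b0‖ := by rw [key]
      _ ≤ ‖g x (-z) + g z y + g a0 b0 - g a0 (-z)‖ + ‖g z b0‖ := norm_sub_le _ _
      _ ≤ (‖g x (-z) + g z y + g a0 b0‖ + ‖g a0 (-z)‖) + ‖g z b0‖ := by
          gcongr; exact norm_sub_le _ _
      _ ≤ ((‖g x (-z)‖ + ‖g z y‖ + ‖g a0 b0‖) + ‖g a0 (-z)‖) + ‖g z b0‖ := by
          gcongr; exact norm_add₃_le
      _ ≤ 5 * ε := by linarith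
end

section
/- Let X be a real normed space, Y a real Banach space, r, s, t positive integers, d > 0 and ε > 0. If f : X → Y satisfies f(0) = 0 and ‖r·f((s·x + t·y)/r) − s·f(x) − t·f(y)‖ ≤ ε for all x, y ∈ X with ‖x‖ + ‖y‖ ≥ d, then there exists a unique additive map T : X → Y with ‖f(x) − T(x)‖ ≤ (15/r)·ε for all x ∈ X. -/
open Filter Topology

theorem hyers_aux {X Y : Type*} [AddCommMonoid X] [NormedAddCommGroup Y]
    [NormedSpace ℝ Y] [CompleteSpace Y]
    (f : X → Y) (δ : ℝ)
    (h : ∀ x y : X, ‖f (x + y) - f x - f y‖ ≤ δ) :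
    ∃ T : X → Y, (∀ x y : X, T (x + y) = T x + T y) ∧ ∀ x : X, ‖f x - T x‖ ≤ δ := by
  have hδ : 0 ≤ δ := le_trans (norm_nonneg _) (h 0 0)
  set u : X → ℕ → Y := fun x n => ((2:ℝ)⁻¹)^n • f ((2^n : ℕ) • x) with hu
  have hstep : ∀ x n, dist (u x n) (u x (n+1)) ≤ (δ/2) * (2⁻¹)^n := by
    intro x n
    have h2 : ((2^(n+1) : ℕ) • x) = (2^n : ℕ) • x + (2^n : ℕ) • x := by
      rw [← add_nsmul]; ring_nf
    have hb : ‖f ((2^(n+1) : ℕ) • x) - (2:ℝ) • f ((2^n : ℕ) • x)‖ ≤ δ := by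
      calc ‖f ((2^(n+1) : ℕ) • x) - (2:ℝ) • f ((2^n : ℕ) • x)‖
          = ‖f ((2^n : ℕ) • x + (2^n : ℕ) • x) - f ((2^n : ℕ) • x) - f ((2^n : ℕ) • x)‖ := by
            rw [h2]; congr 1; module
        _ ≤ δ := h _ _
    have hnorm : dist (u x n) (u x (n+1))
        = ((2:ℝ)⁻¹)^(n+1) * ‖f ((2^(n+1) : ℕ) • x) - (2:ℝ) • f ((2^n : ℕ) • x)‖ := by
      rw [dist_eq_norm', hu]
      simp only
      rw [← norm_smul_of_nonneg (by positivity : (0:ℝ) ≤ ((2:ℝ)⁻¹)^(n+1))]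
      congr 1
      module
    rw [hnorm]
    calc ((2:ℝ)⁻¹)^(n+1) * ‖f ((2^(n+1) : ℕ) • x) - (2:ℝ) • f ((2^n : ℕ) • x)‖
        ≤ ((2:ℝ)⁻¹)^(n+1) * δ := mul_le_mul_of_nonneg_left hb (by positivity)
      _ = (δ/2) * (2⁻¹)^n := by ring
  have hcauchy : ∀ x, CauchySeq (u x) := fun x =>
    cauchySeq_of_le_geometric 2⁻¹ (δ/2) (by norm_num) (hstep x)
  choose T hT using fun x => cauchySeq_tendsto_of_complete (hcauchy x)
  refine ⟨T, ?_, ?_⟩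
  · intro x y
    have hdiff : Tendsto (fun n => u (x+y) n - u x n - u y n) atTop (𝓝 (T (x+y) - T x - T y)) :=
      ((hT (x+y)).sub (hT x)).sub (hT y)
    have hzero : Tendsto (fun n => u (x+y) n - u x n - u y n) atTop (𝓝 0) := by
      apply squeeze_zero_norm (a := fun n => δ * (2⁻¹)^n)
      · intro n
        have heq : u (x+y) n - u x n - u y n
            = ((2:ℝ)⁻¹)^n • (f ((2^n : ℕ) • x + (2^n : ℕ) • y) - f ((2^n : ℕ) • x) - f ((2^n : ℕ) • y)) := by
          rw [hu]; simp only [smul_add]; module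
        rw [heq, norm_smul_of_nonneg (by positivity)]
        calc ((2:ℝ)⁻¹)^n * ‖_‖ ≤ ((2:ℝ)⁻¹)^n * δ := mul_le_mul_of_nonneg_left (h _ _) (by positivity)
          _ = δ * (2⁻¹)^n := by ring
      · simpa using (tendsto_pow_atTop_nhds_zero_of_lt_one (by norm_num : (0:ℝ) ≤ 2⁻¹)
          (by norm_num : (2:ℝ)⁻¹ < 1)).const_mul δ
    have := tendsto_nhds_unique hdiff hzero
    linear_combination (norm := module) this
  · intro x
    have h0 : u x 0 = f x := by simp [hu]
    have := dist_le_of_le_geometric_of_tendsto₀ 2⁻¹ (δ/2) (by norm_num) (hstep x) (hT x)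
    rw [h0, dist_eq_norm] at this
    calc ‖f x - T x‖ ≤ (δ/2) / (1 - 2⁻¹) := this
      _ = δ := by ring_nf

theorem uniq_aux {X Y : Type*} [AddCommMonoid X] [NormedAddCommGroup Y]
    [NormedSpace ℝ Y] {T T' : X → Y}
    (hT : ∀ x y, T (x + y) = T x + T y) (hT' : ∀ x y, T' (x + y) = T' x + T' y)
    {C : ℝ} (hb : ∀ x, ‖T x - T' x‖ ≤ C) : T = T' := by
  have h0 : T 0 = 0 := by
    have h := hT 0 0; rw [add_zero] at h; exact left_eq_add.mp h
  have h0' : T' 0 = 0 := by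
    have h := hT' 0 0; rw [add_zero] at h; exact left_eq_add.mp h
  have hnT : ∀ (n : ℕ) (x : X), T (n • x) = n • T x := by
    intro n x; induction n with
    | zero => simpa using h0
    | succ n ih => rw [succ_nsmul, hT, ih, succ_nsmul]
  have hnT' : ∀ (n : ℕ) (x : X), T' (n • x) = n • T' x := by
    intro n x; induction n with
    | zero => simpa using h0'
    | succ n ih => rw [succ_nsmul, hT', ih, succ_nsmul]
  funext x
  by_contra hne
  have hpos : 0 < ‖T x - T' x‖ := norm_pos_iff.mpr (sub_ne_zero.mpr hne)
  obtain ⟨n, hn⟩ := exists_nat_gt (C / ‖T x - T' x‖)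
  have hle : (n:ℝ) * ‖T x - T' x‖ ≤ C := by
    have hC := hb (n • x)
    rw [hnT, hnT', ← smul_sub, ← Nat.cast_smul_eq_nsmul ℝ, norm_smul] at hC
    simpa using hC
  have := (div_lt_iff₀ hpos).mp hn
  linarith

theorem stmt_4 {X Y : Type*} [NormedAddCommGroup X] [NormedSpace ℝ X]
    [NormedAddCommGroup Y] [NormedSpace ℝ Y] [CompleteSpace Y]
    (r s t : ℕ) (hr : 0 < r) (hs : 0 < s) (ht : 0 < t)
    (d ε : ℝ) (hd : 0 < d) (hε : 0 < ε)
    (f : X → Y) (hf0 : f 0 = 0)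
    (hineq : ∀ x y : X, d ≤ ‖x‖ + ‖y‖ →
      ‖(r : ℝ) • f (((r : ℝ)⁻¹) • ((s : ℝ) • x + (t : ℝ) • y)) - (s : ℝ) • f x - (t : ℝ) • f y‖
        ≤ ε) :
    ∃! T : X → Y, (∀ x y : X, T (x + y) = T x + T y) ∧
      ∀ x : X, ‖f x - T x‖ ≤ (15 / r : ℝ) * ε := by
  have hr' : (0:ℝ) < r := Nat.cast_pos.mpr hr
  have hs' : (0:ℝ) < s := Nat.cast_pos.mpr hs
  have ht' : (0:ℝ) < t := Nat.cast_pos.mpr ht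
  have hC0 : (0:ℝ) ≤ 15 / r * ε := by positivity
  rcases subsingleton_or_nontrivial X with hX | hX
  · refine ⟨0, ⟨fun x y => by simp, fun x => ?_⟩, fun T' ⟨h1, h2⟩ => ?_⟩
    · rw [Subsingleton.elim x 0, hf0]; simpa using hC0
    · have h0' : T' 0 = 0 := by
        have h := h1 0 0; rw [add_zero] at h; exact left_eq_add.mp h
      funext x
      rw [Subsingleton.elim x 0, h0']; rfl
  · -- Step A : Cauchy difference bounded for large arguments
    have cauchy_large : ∀ a b : X, d * s / r ≤ ‖a‖ → d * t / r ≤ ‖b‖ →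
        ‖f (a + b) - f a - f b‖ ≤ 3 * ε / r := by
      intro a b ha hb
      set a' : X := ((r:ℝ)/s) • a with ha'
      set b' : X := ((r:ℝ)/t) • b with hb'
      have hna : ‖a'‖ = (r/s : ℝ) * ‖a‖ := by
        rw [ha', norm_smul, Real.norm_eq_abs, abs_of_pos (by positivity)]
      have hnb : ‖b'‖ = (r/t : ℝ) * ‖b‖ := by
        rw [hb', norm_smul, Real.norm_eq_abs, abs_of_pos (by positivity)]
      have hda : d ≤ ‖a'‖ := by
        rw [hna]
        calc d = (r/s : ℝ) * (d * s / r) := by field_simp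
          _ ≤ (r/s : ℝ) * ‖a‖ := by gcongr
      have hdb : d ≤ ‖b'‖ := by
        rw [hnb]
        calc d = (r/t : ℝ) * (d * t / r) := by field_simp
          _ ≤ (r/t : ℝ) * ‖b‖ := by gcongr
      have harg1 : ((r:ℝ)⁻¹) • ((s:ℝ) • a' + (t:ℝ) • b') = a + b := by
        rw [ha', hb']; match_scalars <;> field_simp
      have harg2 : ((r:ℝ)⁻¹) • ((s:ℝ) • a' + (t:ℝ) • (0:X)) = a := by
        rw [ha']; match_scalars; field_simp
      have harg3 : ((r:ℝ)⁻¹) • ((s:ℝ) • (0:X) + (t:ℝ) • b') = b := by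
        rw [hb']; match_scalars; field_simp
      have h1 := hineq a' b' (by linarith [norm_nonneg b'])
      have h2 := hineq a' 0 (by simpa using hda)
      have h3 := hineq (0:X) b' (by simpa using hdb)
      rw [harg1] at h1
      rw [harg2, hf0] at h2
      rw [harg3, hf0] at h3
      have key : (r:ℝ) • (f (a + b) - f a - f b)
          = ((r:ℝ) • f (a+b) - (s:ℝ) • f a' - (t:ℝ) • f b')
            - ((r:ℝ) • f a - (s:ℝ) • f a' - (t:ℝ) • (0:Y))
            - ((r:ℝ) • f b - (s:ℝ) • (0:Y) - (t:ℝ) • f b') := by module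
      have hnr : ‖(r:ℝ) • (f (a + b) - f a - f b)‖ ≤ 3 * ε := by
        rw [key]
        calc ‖_ - _ - _‖ ≤ ‖_ - _‖ + ‖_‖ := norm_sub_le _ _
          _ ≤ ‖_‖ + ‖_‖ + ‖_‖ := by gcongr; exact norm_sub_le _ _
          _ ≤ ε + ε + ε := by gcongr
          _ = 3 * ε := by ring
      rw [norm_smul, Real.norm_eq_abs, abs_of_pos hr'] at hnr
      rw [le_div_iff₀ hr']
      linarith [hnr]
    -- Step B : Cauchy difference bounded everywhere
    have cauchy_all : ∀ x y : X, ‖f (x + y) - f x - f y‖ ≤ 12 * ε / r := by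
      intro x y
      set K : ℝ := d * s / r + d * t / r with hK
      have hKs : d * s / r ≤ K := le_add_of_nonneg_right (by positivity)
      have hKt : d * t / r ≤ K := le_add_of_nonneg_left (by positivity)
      obtain ⟨z0, hz0⟩ := exists_ne (0 : X)
      have hz0n : (0:ℝ) < ‖z0‖ := norm_pos_iff.mpr hz0
      set c : ℝ := K + ‖x‖ + ‖y‖ with hc
      have hcpos : 0 < c := by rw [hc, hK]; positivity
      set z : X := (c / ‖z0‖) • z0 with hz
      have hzn : ‖z‖ = c := by
        rw [hz, norm_smul, Real.norm_eq_abs, abs_of_pos (by positivity), div_mul_cancel₀]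
        exact ne_of_gt hz0n
      have hxz : K ≤ ‖x + z‖ := by
        have h1 : ‖z‖ ≤ ‖x + z‖ + ‖x‖ := by
          calc ‖z‖ = ‖(x + z) - x‖ := by congr 1; abel
            _ ≤ ‖x + z‖ + ‖x‖ := norm_sub_le _ _
        rw [hzn, hc] at h1
        linarith [norm_nonneg y]
      have hyz : K ≤ ‖y - z‖ := by
        have h1 : ‖z‖ ≤ ‖y - z‖ + ‖y‖ := by
          calc ‖z‖ = ‖(y - z) - y‖ := by
                rw [show (y - z) - y = -z by abel, norm_neg]
            _ ≤ ‖y - z‖ + ‖y‖ := norm_sub_le _ _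
        rw [hzn, hc] at h1
        linarith [norm_nonneg x]
      have hzK : K ≤ ‖z‖ := by rw [hzn, hc]; linarith [norm_nonneg x, norm_nonneg y]
      have hzK' : K ≤ ‖-z‖ := by rwa [norm_neg]
      have D1 := cauchy_large (x + z) (y - z) (le_trans hKs hxz) (le_trans hKt hyz)
      have D2 := cauchy_large (x + z) (-z) (le_trans hKs hxz) (le_trans hKt hzK')
      have D3 := cauchy_large (y - z) z (le_trans hKs hyz) (le_trans hKt hzK)
      have D4 := cauchy_large z (-z) (le_trans hKs hzK) (le_trans hKt hzK')
      rw [show (x + z) + (y - z) = x + y by abel] at D1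
      rw [show (x + z) + -z = x by abel] at D2
      rw [show (y - z) + z = y by abel] at D3
      rw [show z + -z = (0:X) by abel, hf0] at D4
      have key : f (x + y) - f x - f y
          = (f (x + y) - f (x + z) - f (y - z))
            - (f x - f (x + z) - f (-z))
            - (f y - f (y - z) - f z)
            + ((0:Y) - f z - f (-z)) := by abel
      calc ‖f (x + y) - f x - f y‖
          = ‖(f (x + y) - f (x + z) - f (y - z))
            - (f x - f (x + z) - f (-z))
            - (f y - f (y - z) - f z)
            + ((0:Y) - f z - f (-z))‖ := by rw [← key]
        _ ≤ ‖(f (x + y) - f (x + z) - f (y - z))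
            - (f x - f (x + z) - f (-z))
            - (f y - f (y - z) - f z)‖ + ‖(0:Y) - f z - f (-z)‖ := norm_add_le _ _
        _ ≤ (‖(f (x + y) - f (x + z) - f (y - z))
            - (f x - f (x + z) - f (-z))‖ + ‖f y - f (y - z) - f z‖) + ‖(0:Y) - f z - f (-z)‖ := by
              gcongr; exact norm_sub_le _ _
        _ ≤ ((‖f (x + y) - f (x + z) - f (y - z)‖ + ‖f x - f (x + z) - f (-z)‖)
            + ‖f y - f (y - z) - f z‖) + ‖(0:Y) - f z - f (-z)‖ := by
              gcongr; exact norm_sub_le _ _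
        _ ≤ ((3 * ε / r + 3 * ε / r) + 3 * ε / r) + 3 * ε / r := by gcongr
        _ = 12 * ε / r := by ring
    -- Step C : Hyers construction
    obtain ⟨T, hTadd, hTb⟩ := hyers_aux f (12 * ε / r) cauchy_all
    have hbound : ∀ x : X, ‖f x - T x‖ ≤ (15 / r : ℝ) * ε := by
      intro x
      calc ‖f x - T x‖ ≤ 12 * ε / r := hTb x
        _ ≤ 15 / r * ε := by
            rw [show (15:ℝ) / r * ε = 15 * ε / r by ring]
            gcongr
            linarith
    refine ⟨T, ⟨hTadd, hbound⟩, ?_⟩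
    rintro T' ⟨h1, h2⟩
    refine uniq_aux h1 hTadd (C := 15 / r * ε + 15 / r * ε) ?_
    intro x
    calc ‖T' x - T x‖ = ‖(T' x - f x) + (f x - T x)‖ := by congr 1; abel
      _ ≤ ‖T' x - f x‖ + ‖f x - T x‖ := norm_add_le _ _
      _ ≤ 15 / r * ε + 15 / r * ε := by
          gcongr
          · rw [norm_sub_rev]; exact h2 x
          · exact hbound x
end

section
/- Let X be a real normed space, Y a real Banach space, and r, s, t positive integers. A map f : X → Y with f(0) = 0 is additive if and only if ‖r·f((s·x + t·y)/r) − s·f(x) − t·f(y)‖ → 0 as ‖x‖ + ‖y‖ → ∞ (i.e., for every ε > 0 there exists d > 0 such that the norm of the Jensen difference is at most ε whenever ‖x‖ + ‖y‖ ≥ d). -/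
/-!
If `f` is additive, it commutes with multiplication by natural numbers and their inverses, so the
Jensen difference vanishes identically. Conversely, with `x = (r/s)•a` and `y = (r/t)•b` the Cauchy
difference `f (a + b) - f a - f b` is `1/r` times a combination of three Jensen differences, so it
tends to `0` as `‖a‖` and `‖b‖` both tend to infinity. Finally, for fixed `x, y` and any `z`,
the Cauchy difference at `(x, y)` is a signed sum of those at `(x + z, y - z)`, `(x + z, -z)`,
`(y - z, z)` and `(z, -z)`, all of whose arguments are large when `‖z‖` is; hence it is `0`.
-/

section

variable {X Y : Type*} [NormedAddCommGroup X] [NormedSpace ℝ X]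
  [NormedAddCommGroup Y] [NormedSpace ℝ Y]

noncomputable def jensenDiff (r s t : ℝ) (f : X → Y) (x y : X) : Y :=
  r • f (r⁻¹ • (s • x + t • y)) - s • f x - t • f y

theorem jensenDiff_eq_zero_of_map_add {f : X → Y} (hadd : ∀ x y, f (x + y) = f x + f y)
    {r : ℕ} (hr : r ≠ 0) (s t : ℕ) (x y : X) : jensenDiff r s t f x y = 0 := by
  let F := AddMonoidHom.mk' f hadd
  have hF : ∀ (n : ℕ) (v : X), f ((n : ℝ) • v) = (n : ℝ) • f v := map_natCast_smul F ℝ ℝ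
  have hr' : (r : ℝ) ≠ 0 := Nat.cast_ne_zero.mpr hr
  rw [jensenDiff, ← hF, smul_inv_smul₀ hr', hadd, hF, hF, add_sub_cancel_left, sub_self]

theorem jensenDiff_smul_div_smul_div {r s t : ℝ} (hr : r ≠ 0) (hs : s ≠ 0) (ht : t ≠ 0)
    {f : X → Y} (hf0 : f 0 = 0) (a b : X) :
    r • (f (a + b) - f a - f b) = jensenDiff r s t f ((r / s) • a) ((r / t) • b)
      - jensenDiff r s t f ((r / s) • a) 0 - jensenDiff r s t f 0 ((r / t) • b) := by
  simp only [jensenDiff, smul_smul, mul_div_cancel₀ r hs, mul_div_cancel₀ r ht, ← smul_add,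
    inv_smul_smul₀ hr, smul_zero, add_zero, zero_add, hf0]
  module

theorem le_norm_div_smul {r s d : ℝ} (hr : 0 < r) (hs : 0 < s) {a : X} (h : s / r * d ≤ ‖a‖) :
    d ≤ ‖(r / s) • a‖ := by
  rw [norm_smul, Real.norm_of_nonneg (by positivity)]
  calc d = r / s * (s / r * d) := by field_simp
    _ ≤ r / s * ‖a‖ := by gcongr

theorem exists_norm_map_add_sub_le_of_jensenDiff {r s t : ℝ} (hr : 0 < r) (hs : 0 < s)
    (ht : 0 < t) {f : X → Y} (hf0 : f 0 = 0)
    (hJ : ∀ ε : ℝ, 0 < ε → ∃ d : ℝ, 0 < d ∧ ∀ x y : X, d ≤ ‖x‖ + ‖y‖ →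
      ‖jensenDiff r s t f x y‖ ≤ ε) :
    ∀ ε : ℝ, 0 < ε → ∃ D : ℝ, ∀ a b : X, D ≤ ‖a‖ → D ≤ ‖b‖ → ‖f (a + b) - f a - f b‖ ≤ ε := by
  intro ε hε
  obtain ⟨d, hd, hJd⟩ := hJ (r * ε / 3) (by positivity)
  refine ⟨(s + t) / r * d, fun a b ha hb => ?_⟩
  have hx : d ≤ ‖(r / s) • a‖ :=
    le_norm_div_smul hr hs (le_trans (by gcongr; linarith) ha)
  have hy : d ≤ ‖(r / t) • b‖ :=
    le_norm_div_smul hr ht (le_trans (by gcongr; linarith) hb)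
  have h1 := hJd ((r / s) • a) ((r / t) • b) (le_add_of_le_of_nonneg hx (norm_nonneg _))
  have h2 := hJd ((r / s) • a) 0 (by rwa [norm_zero, add_zero])
  have h3 := hJd 0 ((r / t) • b) (by rwa [norm_zero, zero_add])
  have key : r * ‖f (a + b) - f a - f b‖ ≤ r * ε := by
    rw [← Real.norm_of_nonneg hr.le, ← norm_smul,
      jensenDiff_smul_div_smul_div hr.ne' hs.ne' ht.ne' hf0, Real.norm_of_nonneg hr.le]
    grw [norm_sub_le, norm_sub_le, h1, h2, h3]
    linarith
  exact le_of_mul_le_mul_left key hr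

end

theorem map_add_of_norm_map_add_sub_le {X Y : Type*} [NormedAddCommGroup X] [NormedSpace ℝ X]
    [NormedAddCommGroup Y] {f : X → Y} (hf0 : f 0 = 0)
    (hC : ∀ ε : ℝ, 0 < ε → ∃ D : ℝ, ∀ a b : X, D ≤ ‖a‖ → D ≤ ‖b‖ →
      ‖f (a + b) - f a - f b‖ ≤ ε) (x y : X) :
    f (x + y) = f x + f y := by
  rcases subsingleton_or_nontrivial X with hX | hX
  · rw [Subsingleton.elim x 0, Subsingleton.elim y 0, add_zero, hf0, add_zero]
  suffices ‖f (x + y) - f x - f y‖ ≤ 0 by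
    rwa [norm_le_zero_iff, sub_sub, sub_eq_zero] at this
  refine le_of_forall_pos_le_add fun ε hε => ?_
  obtain ⟨D, hD⟩ := hC (ε / 4) (by positivity)
  obtain ⟨z, hz⟩ := exists_norm_eq X (c := |D| + ‖x‖ + ‖y‖) (by positivity)
  have hDz : D ≤ ‖z‖ := by linarith [le_abs_self D, norm_nonneg x, norm_nonneg y]
  have hxz : D ≤ ‖x + z‖ := by
    have := norm_sub_le (x + z) x
    rw [add_sub_cancel_left] at this
    linarith [le_abs_self D, norm_nonneg y]
  have hyz : D ≤ ‖y - z‖ := by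
    have := norm_sub_le y (y - z)
    rw [sub_sub_cancel] at this
    linarith [le_abs_self D, norm_nonneg x]
  have hDz' : D ≤ ‖-z‖ := by rwa [norm_neg]
  have h1 := hD _ _ hxz hyz
  have h2 := hD _ _ hxz hDz'
  have h3 := hD _ _ hyz hDz
  have h4 := hD _ _ hDz hDz'
  rw [add_add_sub_cancel] at h1
  rw [add_neg_cancel_right] at h2
  rw [sub_add_cancel] at h3
  rw [add_neg_cancel, hf0] at h4
  have key : f (x + y) - f x - f y = (f (x + y) - f (x + z) - f (y - z))
      + -(f x - f (x + z) - f (-z)) + -(f y - f (y - z) - f z) + (0 - f z - f (-z)) := by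
    abel
  rw [key]
  grw [norm_add₄_le, norm_neg, norm_neg, h1, h2, h3, h4]
  linarith

theorem stmt_5_general {X Y : Type*} [NormedAddCommGroup X] [NormedSpace ℝ X]
    [NormedAddCommGroup Y] [NormedSpace ℝ Y]
    (r s t : ℕ) (hr : 0 < r) (hs : 0 < s) (ht : 0 < t)
    (f : X → Y) (hf0 : f 0 = 0) :
    (∀ x y : X, f (x + y) = f x + f y) ↔
      (∀ ε : ℝ, 0 < ε → ∃ d : ℝ, 0 < d ∧ ∀ x y : X, d ≤ ‖x‖ + ‖y‖ →
        ‖(r : ℝ) • f (((r : ℝ)⁻¹) • ((s : ℝ) • x + (t : ℝ) • y)) - (s : ℝ) • f x - (t : ℝ) • f y‖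
          ≤ ε) := by
  constructor
  · exact fun hadd ε hε => ⟨1, one_pos, fun x y _ =>
      (norm_eq_zero.2 (jensenDiff_eq_zero_of_map_add hadd hr.ne' s t x y)).le.trans hε.le⟩
  · exact fun hJ => map_add_of_norm_map_add_sub_le hf0 <| exists_norm_map_add_sub_le_of_jensenDiff
      (Nat.cast_pos.2 hr) (Nat.cast_pos.2 hs) (Nat.cast_pos.2 ht) hf0 hJ

theorem stmt_5 {X Y : Type*} [NormedAddCommGroup X] [NormedSpace ℝ X]
    [NormedAddCommGroup Y] [NormedSpace ℝ Y] [CompleteSpace Y]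
    (r s t : ℕ) (hr : 0 < r) (hs : 0 < s) (ht : 0 < t)
    (f : X → Y) (hf0 : f 0 = 0) :
    (∀ x y : X, f (x + y) = f x + f y) ↔
      (∀ ε : ℝ, 0 < ε → ∃ d : ℝ, 0 < d ∧ ∀ x y : X, d ≤ ‖x‖ + ‖y‖ →
        ‖(r : ℝ) • f (((r : ℝ)⁻¹) • ((s : ℝ) • x + (t : ℝ) • y)) - (s : ℝ) • f x - (t : ℝ) • f y‖
          ≤ ε) :=
  stmt_5_general r s t hr hs ht f hf0
end

section
/- Let X be a real linear space with X₀ = X \ {0}, Y a real Banach space, r, s, t positive integers, and ε > 0. If f : X → Y satisfies f(0) = 0 and ‖r·f((s·x + t·y)/r) − s·f(x) − t·f(y)‖ ≤ ε for all x, y ∈ X₀ (i.e., x ≠ 0 and y ≠ 0), then there exists a unique additive map A : X → Y such that ‖f(x) − A(x)‖ ≤ min{3ε/r, 5ε/(2s), 5ε/(2t)} + 2ε/r for all x ∈ X. -/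
/-!
Four instances of the inequality add up to `‖f (2x) - 2 f x‖ ≤ 4ε/r`, so Hyers' limit
`A x = lim 2⁻ⁿ f (2ⁿ x)` exists, is within `4ε/r` of `f` and satisfies `A (2x) = 2 A x`. The defect
of the equation is homogeneous, hence `A` solves `r A ((s x + t y)/r) = s A x + t A y` exactly on
`X₀`, and this forces additivity. If moreover `r < s + t`, taking `x = y` shows
`‖(f - A) p‖ ≤ r/(s+t) ‖(f - A) ((s+t)/r • p)‖ + ε/(s+t)`, and comparing with the supremum of
`‖f - A‖` improves the bound to `ε/(s+t-r)`; the two bounds together give the estimate.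
Two additive maps at bounded distance from `f` coincide, which gives uniqueness.
-/

open Filter Topology

lemma le_div_one_sub_of_le_mul_comp_add {α : Type*} {φ : α → ℝ} {T : α → α} {μ c : ℝ}
    (hφ : BddAbove (Set.range φ)) (hμ0 : 0 ≤ μ) (hμ1 : μ < 1)
    (h : ∀ a, φ a ≤ μ * φ (T a) + c) (a : α) : φ a ≤ c / (1 - μ) := by
  have : Nonempty α := ⟨a⟩
  have hsup : ⨆ b, φ b ≤ μ * (⨆ b, φ b) + c :=
    ciSup_le fun b => (h b).trans <| by gcongr; exact le_ciSup hφ _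
  rw [le_div_iff₀ (by linarith)]
  nlinarith [mul_le_mul_of_nonneg_right (le_ciSup hφ a) (by linarith : 0 ≤ 1 - μ)]

lemma le_five_mul_div_two_mul_add_two_mul_div {r s t ε d : ℝ} (hr : 0 < r) (hs : 0 < s)
    (ht : 0 < t) (hε : 0 ≤ ε) (h : d ≤ 4 * ε / r) (hst : r < s + t → d ≤ ε / (s + t - r)) :
    d ≤ 5 * ε / (2 * s) + 2 * ε / r := by
  rcases le_or_gt (4 * s) (5 * r) with hsr | hsr
  · have : 2 * ε / r ≤ 5 * ε / (2 * s) := by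
      rw [div_le_div_iff₀ hr (by positivity)]
      nlinarith
    calc d ≤ 4 * ε / r := h
      _ = 2 * ε / r + 2 * ε / r := by ring
      _ ≤ 5 * ε / (2 * s) + 2 * ε / r := by gcongr
  · have hD : 0 < s + t - r := by linarith
    refine (hst (by linarith)).trans ?_
    rw [div_add_div _ _ (by positivity) hr.ne', div_le_div_iff₀ hD (by positivity)]
    nlinarith [mul_nonneg hε (mul_nonneg (by linarith : 0 ≤ 4 * s - 5 * r) (by linarith : 0 ≤ s + r)),
      mul_nonneg hε (mul_nonneg (by linarith : 0 ≤ 5 * r + 4 * s) ht.le)]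

lemma le_min_add_two_mul_div {r s t ε d : ℝ} (hr : 0 < r) (hs : 0 < s) (ht : 0 < t) (hε : 0 ≤ ε)
    (h : d ≤ 4 * ε / r) (hst : r < s + t → d ≤ ε / (s + t - r)) :
    d ≤ min (3 * ε / r) (min (5 * ε / (2 * s)) (5 * ε / (2 * t))) + 2 * ε / r := by
  rw [← min_add_add_right, ← min_add_add_right]
  refine le_min (h.trans ?_) (le_min ?_ ?_)
  · rw [← add_div]
    gcongr
    linarith
  · exact le_five_mul_div_two_mul_add_two_mul_div hr hs ht hε h hst
  · refine le_five_mul_div_two_mul_add_two_mul_div hr ht hs hε h fun hrst => ?_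
    exact (hst (by linarith)).trans_eq (by ring_nf)

lemma eq_of_additive_of_norm_sub_le {X Y : Type*} [AddCommGroup X] [NormedAddCommGroup Y]
    [NormedSpace ℝ Y] {f A A' : X → Y} {C : ℝ}
    (hA : ∀ x y, A (x + y) = A x + A y) (hA' : ∀ x y, A' (x + y) = A' x + A' y)
    (hfA : ∀ x, ‖f x - A x‖ ≤ C) (hfA' : ∀ x, ‖f x - A' x‖ ≤ C) : A = A' := by
  funext x
  have hbound (n : ℕ) : n * ‖A x - A' x‖ ≤ 2 * C := by
    have hn : n • (A x - A' x) = (f (n • x) - A' (n • x)) - (f (n • x) - A (n • x)) := by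
      have hAn : A (n • x) = n • A x := map_nsmul (AddMonoidHom.mk' A hA) n x
      have hAn' : A' (n • x) = n • A' x := map_nsmul (AddMonoidHom.mk' A' hA') n x
      rw [hAn, hAn', nsmul_sub]
      abel
    calc n * ‖A x - A' x‖ = ‖n • (A x - A' x)‖ := by
          rw [← Nat.cast_smul_eq_nsmul ℝ, norm_smul, RCLike.norm_natCast]
      _ ≤ C + C := by rw [hn]; exact (norm_sub_le _ _).trans (add_le_add (hfA' _) (hfA _))
      _ = 2 * C := by ring
  by_contra hne
  have hpos : 0 < ‖A x - A' x‖ := norm_pos_iff.mpr (sub_ne_zero.mpr hne)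
  obtain ⟨n, hn⟩ := exists_nat_gt (2 * C / ‖A x - A' x‖)
  rw [div_lt_iff₀ hpos] at hn
  linarith [hbound n]

section Hyers

variable {X Y : Type*} [AddCommGroup X] [Module ℝ X] [NormedAddCommGroup Y] [NormedSpace ℝ Y]

noncomputable def hyersSeq (f : X → Y) (x : X) (n : ℕ) : Y := ((2 : ℝ) ^ n)⁻¹ • f ((2 : ℝ) ^ n • x)

noncomputable def hyersLimit (f : X → Y) (x : X) : Y := limUnder atTop (hyersSeq f x)

variable {f : X → Y} {δ : ℝ}

lemma dist_hyersSeq_succ_le (hf : ∀ x, ‖f ((2 : ℝ) • x) - (2 : ℝ) • f x‖ ≤ δ) (x : X) (n : ℕ) :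
    dist (hyersSeq f x n) (hyersSeq f x (n + 1)) ≤ δ / 2 * 2⁻¹ ^ n := by
  have hrepr : hyersSeq f x n - hyersSeq f x (n + 1) =
      -((2 : ℝ) ^ (n + 1))⁻¹ • (f ((2 : ℝ) • (2 : ℝ) ^ n • x) - (2 : ℝ) • f ((2 : ℝ) ^ n • x)) := by
    rw [smul_smul, ← pow_succ']
    simp only [hyersSeq]
    module
  rw [dist_eq_norm, hrepr, norm_smul, norm_neg, norm_inv, norm_pow, Real.norm_two]
  calc ((2 : ℝ) ^ (n + 1))⁻¹ * _ ≤ ((2 : ℝ) ^ (n + 1))⁻¹ * δ := by gcongr; exact hf _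
    _ = δ / 2 * 2⁻¹ ^ n := by rw [pow_succ, mul_inv, inv_pow]; ring

variable [CompleteSpace Y]

lemma tendsto_hyersSeq (hf : ∀ x, ‖f ((2 : ℝ) • x) - (2 : ℝ) • f x‖ ≤ δ) (x : X) :
    Tendsto (hyersSeq f x) atTop (𝓝 (hyersLimit f x)) :=
  (cauchySeq_of_le_geometric _ _ (by norm_num) (dist_hyersSeq_succ_le hf x)).tendsto_limUnder

lemma norm_sub_hyersLimit_le (hf : ∀ x, ‖f ((2 : ℝ) • x) - (2 : ℝ) • f x‖ ≤ δ) (x : X) :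
    ‖f x - hyersLimit f x‖ ≤ δ := by
  have h := dist_le_of_le_geometric_of_tendsto₀ _ _ (by norm_num) (dist_hyersSeq_succ_le hf x)
    (tendsto_hyersSeq hf x)
  rw [dist_eq_norm] at h
  simpa [hyersSeq] using h.trans_eq (by ring)

lemma hyersLimit_two_smul (hf : ∀ x, ‖f ((2 : ℝ) • x) - (2 : ℝ) • f x‖ ≤ δ) (x : X) :
    hyersLimit f ((2 : ℝ) • x) = (2 : ℝ) • hyersLimit f x := by
  have hshift : (fun n => (2 : ℝ) • hyersSeq f x (n + 1)) = hyersSeq f ((2 : ℝ) • x) := by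
    funext n
    simp only [hyersSeq, smul_smul, ← pow_succ]
    congr 1
    rw [pow_succ]
    field_simp
  refine tendsto_nhds_unique (tendsto_hyersSeq hf _) ?_
  rw [← hshift]
  exact ((tendsto_hyersSeq hf x).comp (tendsto_add_atTop_nat 1)).const_smul _

end Hyers

section Jensen

variable {X Y : Type*} [AddCommGroup X] [Module ℝ X] [NormedAddCommGroup Y] [NormedSpace ℝ Y]

noncomputable def jensenDefect (r s t : ℝ) (f : X → Y) (x y : X) : Y :=
  r • f (r⁻¹ • (s • x + t • y)) - s • f x - t • f y

variable {r s t ε δ : ℝ} {f : X → Y}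

lemma jensenDefect_mul_div_smul (hr : r ≠ 0) (hs : s ≠ 0) (ht : t ≠ 0) {a b c : ℝ}
    (habc : a + b = c) (x : X) :
    jensenDefect r s t f ((a * (r / s)) • x) ((b * (r / t)) • x) =
      r • f (c • x) - s • f ((a * (r / s)) • x) - t • f ((b * (r / t)) • x) := by
  have hc : r⁻¹ * (s * (a * (r / s)) + t * (b * (r / t))) = c := by
    field_simp
    linarith
  simp only [jensenDefect, smul_smul, ← add_smul, hc]

lemma norm_two_smul_sub_le_of_jensenDefect (hr : 0 < r) (hs : s ≠ 0) (ht : t ≠ 0) (hε : 0 ≤ ε)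
    (hf0 : f 0 = 0) (hf : ∀ x y, x ≠ 0 → y ≠ 0 → ‖jensenDefect r s t f x y‖ ≤ ε) (x : X) :
    ‖f ((2 : ℝ) • x) - (2 : ℝ) • f x‖ ≤ 4 * ε / r := by
  rcases eq_or_ne x 0 with rfl | hx
  · simp only [smul_zero, hf0, sub_zero, norm_zero]
    positivity
  set g : ℝ → ℝ → Y := fun a b => jensenDefect r s t f ((a * (r / s)) • x) ((b * (r / t)) • x)
  have hg (a b : ℝ) (ha : a ≠ 0) (hb : b ≠ 0) : ‖g a b‖ ≤ ε :=
    hf _ _ (smul_ne_zero (by simp [*, hr.ne']) hx) (smul_ne_zero (by simp [*, hr.ne']) hx)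
  -- the values of `f` at the multiples of `r/s • x` and of `r/t • x` cancel in pairs
  have hsplit : r • (f ((2 : ℝ) • x) - (2 : ℝ) • f x) =
      g 3 (-1) - g 2 (-1) - g 3 (-2) + g 2 (-2) := by
    simp only [g, jensenDefect_mul_div_smul hr.ne' hs ht (by norm_num : (3 : ℝ) + -1 = 2),
      jensenDefect_mul_div_smul hr.ne' hs ht (by norm_num : (2 : ℝ) + -1 = 1),
      jensenDefect_mul_div_smul hr.ne' hs ht (by norm_num : (3 : ℝ) + -2 = 1),
      jensenDefect_mul_div_smul hr.ne' hs ht (by norm_num : (2 : ℝ) + -2 = 0),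
      one_smul, zero_smul, hf0]
    module
  rw [le_div_iff₀ hr, mul_comm, ← Real.norm_of_nonneg hr.le, ← norm_smul, hsplit]
  calc ‖g 3 (-1) - g 2 (-1) - g 3 (-2) + g 2 (-2)‖
      ≤ ‖g 3 (-1)‖ + ‖g 2 (-1)‖ + ‖g 3 (-2)‖ + ‖g 2 (-2)‖ := by
        simpa only [sub_eq_add_neg, norm_neg] using
          norm_add₄_le (a := g 3 (-1)) (b := -g 2 (-1)) (c := -g 3 (-2)) (d := g 2 (-2))
    _ ≤ ε + ε + ε + ε := by gcongr <;> exact hg _ _ (by norm_num) (by norm_num)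
    _ = 4 * ε := by ring

lemma jensenDefect_hyersSeq (x y : X) (n : ℕ) :
    jensenDefect r s t (fun z => hyersSeq f z n) x y =
      ((2 : ℝ) ^ n)⁻¹ • jensenDefect r s t f ((2 : ℝ) ^ n • x) ((2 : ℝ) ^ n • y) := by
  have harg : (2 : ℝ) ^ n • r⁻¹ • (s • x + t • y) =
      r⁻¹ • (s • (2 : ℝ) ^ n • x + t • (2 : ℝ) ^ n • y) := by module
  simp only [jensenDefect, hyersSeq, harg]
  module

lemma jensenDefect_hyersLimit_eq_zero [CompleteSpace Y]
    (hδ : ∀ x, ‖f ((2 : ℝ) • x) - (2 : ℝ) • f x‖ ≤ δ)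
    (hf : ∀ x y, x ≠ 0 → y ≠ 0 → ‖jensenDefect r s t f x y‖ ≤ ε) {x y : X} (hx : x ≠ 0)
    (hy : y ≠ 0) : jensenDefect r s t (hyersLimit f) x y = 0 := by
  have hlim : Tendsto (fun n => jensenDefect r s t (fun z => hyersSeq f z n) x y) atTop
      (𝓝 (jensenDefect r s t (hyersLimit f) x y)) :=
    (((tendsto_hyersSeq hδ _).const_smul r).sub ((tendsto_hyersSeq hδ x).const_smul s)).sub
      ((tendsto_hyersSeq hδ y).const_smul t)
  refine tendsto_nhds_unique hlim (squeeze_zero_norm (a := fun n => ((2 : ℝ) ^ n)⁻¹ * ε) ?_ ?_)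
  · intro n
    rw [jensenDefect_hyersSeq, norm_smul, norm_inv, norm_pow, Real.norm_two]
    gcongr
    exact hf _ _ (smul_ne_zero (by positivity) hx) (smul_ne_zero (by positivity) hy)
  · simpa using
      (tendsto_inv_atTop_zero.comp (tendsto_pow_atTop_atTop_of_one_lt one_lt_two)).mul_const ε

lemma additive_of_jensenDefect_eq_zero (hr : r ≠ 0) (hs : s ≠ 0) (ht : t ≠ 0) {A : X → Y}
    (hA2 : ∀ x, A ((2 : ℝ) • x) = (2 : ℝ) • A x)
    (hA : ∀ x y, x ≠ 0 → y ≠ 0 → jensenDefect r s t A x y = 0) (x y : X) :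
    A (x + y) = A x + A y := by
  have hA0 : A 0 = 0 := by simpa [two_smul] using hA2 0
  set B : X → Y := fun p => s • A ((r / s) • p)
  have hsum {p q : X} (hp : p ≠ 0) (hq : q ≠ 0) :
      r • A (p + q) = B p + t • A ((r / t) • q) := by
    have h := hA _ _ (smul_ne_zero (div_ne_zero hr hs) hp) (smul_ne_zero (div_ne_zero hr ht) hq)
    have harg : r⁻¹ • (s • (r / s) • p + t • (r / t) • q) = p + q := by
      match_scalars <;> field_simp
    rw [jensenDefect, harg, sub_sub, sub_eq_zero] at h
    exact h
  -- `hsum` at `(-q, q)` expresses the `t`-term through `B`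
  have hdiff {p q : X} (hp : p ≠ 0) (hq : q ≠ 0) : r • A (p + q) = B p - B (-q) := by
    have h := hsum (neg_ne_zero.2 hq) hq
    rw [neg_add_cancel, hA0, smul_zero] at h
    linear_combination (norm := module) hsum hp hq - h
  have hodd {p : X} (hp : p ≠ 0) : (2 * r) • A p = B p - B (-p) := by
    rw [← hdiff hp hp, ← two_smul ℝ p, hA2, smul_smul, mul_comm]
  have heven {p q : X} (hp : p ≠ 0) (hq : q ≠ 0) : B p + B (-p) = B q + B (-q) := by
    have hcomm : r • A (p + q) = r • A (q + p) := by rw [add_comm]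
    linear_combination (norm := module) hdiff hq hp - hdiff hp hq + hcomm
  rcases eq_or_ne x 0 with rfl | hx
  · simp [hA0]
  rcases eq_or_ne y 0 with rfl | hy
  · simp [hA0]
  have h : (2 * r) • (A (x + y) - A x - A y) = 0 := by
    linear_combination (norm := module) (2 : ℝ) • hdiff hx hy - hodd hx - hodd hy + heven hx hy
  rw [smul_eq_zero, sub_sub, sub_eq_zero] at h
  exact h.resolve_left (mul_ne_zero two_ne_zero hr)

lemma norm_sub_le_of_jensenDefect_diag (hr : 0 ≤ r) (hrst : r < s + t) (hε : 0 ≤ ε)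
    {A : X → Y} (hf0 : f 0 = 0) (hA0 : A 0 = 0)
    (hf : ∀ x, x ≠ 0 → ‖jensenDefect r s t f x x‖ ≤ ε)
    (hA : ∀ x, x ≠ 0 → jensenDefect r s t A x x = 0)
    (hbdd : BddAbove (Set.range fun x => ‖f x - A x‖)) (x : X) :
    ‖f x - A x‖ ≤ ε / (s + t - r) := by
  have hst : 0 < s + t := by linarith
  set g : X → Y := fun x => f x - A x
  set l : ℝ := r⁻¹ * (s + t)
  have hstep (p : X) : ‖g p‖ ≤ r / (s + t) * ‖g (l • p)‖ + ε / (s + t) := by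
    rcases eq_or_ne p 0 with rfl | hp
    · simp only [g, smul_zero, hf0, hA0, sub_zero, norm_zero]
      positivity
    have hdiag : jensenDefect r s t f p p - jensenDefect r s t A p p =
        r • g (l • p) - (s + t) • g p := by
      simp only [jensenDefect, g, l, ← add_smul, smul_smul]
      module
    have hle : (s + t) * ‖g p‖ ≤ r * ‖g (l • p)‖ + ε :=
      calc (s + t) * ‖g p‖ = ‖(s + t) • g p‖ := by rw [norm_smul, Real.norm_of_nonneg hst.le]
        _ ≤ ‖r • g (l • p)‖ + ‖r • g (l • p) - (s + t) • g p‖ := norm_le_norm_add_norm_sub _ _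
        _ ≤ r * ‖g (l • p)‖ + ε := by
          rw [norm_smul, Real.norm_of_nonneg hr, ← hdiag, hA p hp, sub_zero]
          gcongr
          exact hf p hp
    rw [div_mul_eq_mul_div, ← add_div, le_div_iff₀ hst]
    linarith
  have hμ1 : r / (s + t) < 1 := by rwa [div_lt_one hst]
  refine (le_div_one_sub_of_le_mul_comp_add hbdd (by positivity) hμ1 hstep x).trans_eq ?_
  field_simp

end Jensen

theorem stmt_8 {X Y : Type*} [AddCommGroup X] [Module ℝ X]
    [NormedAddCommGroup Y] [NormedSpace ℝ Y] [CompleteSpace Y]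
    (r s t : ℕ) (hr : 0 < r) (hs : 0 < s) (ht : 0 < t)
    (ε : ℝ) (hε : 0 < ε)
    (f : X → Y) (hf0 : f 0 = 0)
    (hineq : ∀ x y : X, x ≠ 0 → y ≠ 0 →
      ‖(r : ℝ) • f (((r : ℝ)⁻¹) • ((s : ℝ) • x + (t : ℝ) • y)) - (s : ℝ) • f x - (t : ℝ) • f y‖
        ≤ ε) :
    ∃! A : X → Y, (∀ x y : X, A (x + y) = A x + A y) ∧
      ∀ x : X, ‖f x - A x‖ ≤
        min (3 * ε / r) (min (5 * ε / (2 * s)) (5 * ε / (2 * t))) + 2 * ε / r := by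
  have hr' : (0 : ℝ) < r := Nat.cast_pos.2 hr
  have hs' : (0 : ℝ) < s := Nat.cast_pos.2 hs
  have ht' : (0 : ℝ) < t := Nat.cast_pos.2 ht
  have hdouble := norm_two_smul_sub_le_of_jensenDefect hr' hs'.ne' ht'.ne' hε.le hf0 hineq
  set A := hyersLimit f
  have hfA : ∀ x, ‖f x - A x‖ ≤ 4 * ε / r := norm_sub_hyersLimit_le hdouble
  have hAeq : ∀ x y, x ≠ 0 → y ≠ 0 → jensenDefect r s t A x y = 0 :=
    fun x y hx hy => jensenDefect_hyersLimit_eq_zero hdouble hineq hx hy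
  have hAadd := additive_of_jensenDefect_eq_zero hr'.ne' hs'.ne' ht'.ne'
    (hyersLimit_two_smul hdouble) hAeq
  have hfA' (hrst : (r : ℝ) < s + t) (x : X) : ‖f x - A x‖ ≤ ε / (s + t - r) :=
    norm_sub_le_of_jensenDefect_diag hr'.le hrst hε.le hf0 (by simpa using hAadd 0 0)
      (fun x hx => hineq x x hx hx) (fun x hx => hAeq x x hx hx)
      ⟨_, Set.forall_mem_range.2 hfA⟩ x
  have hbound (x : X) : ‖f x - A x‖ ≤
      min (3 * ε / r) (min (5 * ε / (2 * s)) (5 * ε / (2 * t))) + 2 * ε / r :=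
    le_min_add_two_mul_div hr' hs' ht' hε.le (hfA x) (hfA' · x)
  exact ⟨A, ⟨hAadd, hbound⟩,
    fun A' hA' => (eq_of_additive_of_norm_sub_le hAadd hA'.1 hbound hA'.2).symm⟩
end

section
/- Let B be an open ball centered at 0 in a real inner product space X, Y a real vector space, and r, s, t positive integers. If f : B → Y satisfies f(0) = 0 and r·f((s·x + t·y)/r) = s·f(x) + t·f(y) for all x, y ∈ B with ⟨x, y⟩ = 0 and (s·x + t·y)/r ∈ B, then f is orthogonally additive on B: f(x + y) = f(x) + f(y) for all x, y ∈ B with ⟨x, y⟩ = 0 and x + y ∈ B. -/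
/-!
With `A = s/r` and `B = t/r` the equation reads `f (A • a + B • b) = A • f a + B • f b`; taking
`b = 0` or `a = 0` shows that `f` commutes with scaling by `A` and by `B`. Unless `A = B = 1`
(where the equation is already orthogonal additivity), one of them, or its inverse, is a
contraction `e < 1`, so `f` commutes with scaling by every power `e ^ k`. For small `ε` the
orthogonal vectors `B • ε • x` and `A • ε • y` lie in the ball together with
`A • B • ε • (x + y)`, and the equation at them, after pulling out `A` and `B`, is additivity
at `ε • x, ε • y`. Taking `ε = e ^ k` and scaling back gives additivity at `x, y`.
-/

open Filter Topology

section Homogeneous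

variable {E Y : Type*} [NormedAddCommGroup E] [NormedSpace ℝ E] [AddCommGroup Y] [Module ℝ Y]
  {R : ℝ} {f : E → Y} {c d : ℝ}

def HomogeneousOnBall (R : ℝ) (f : E → Y) (c : ℝ) : Prop :=
  ∀ u : E, ‖u‖ < R → ‖c • u‖ < R → f (c • u) = c • f u

theorem norm_smul_lt_of_abs_le_one {u : E} (hc : |c| ≤ 1) (hu : ‖u‖ < R) : ‖c • u‖ < R := by
  rw [norm_smul, Real.norm_eq_abs]
  nlinarith [norm_nonneg u, abs_nonneg c]

namespace HomogeneousOnBall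

theorem map_smul_of_abs_le_one (h : HomogeneousOnBall R f c) (hc : |c| ≤ 1) {u : E}
    (hu : ‖u‖ < R) : f (c • u) = c • f u :=
  h u hu (norm_smul_lt_of_abs_le_one hc hu)

theorem inv (h : HomogeneousOnBall R f c) (hc : c ≠ 0) : HomogeneousOnBall R f c⁻¹ := by
  intro u hu hcu
  have := h (c⁻¹ • u) hcu (by rwa [smul_inv_smul₀ hc])
  rw [smul_inv_smul₀ hc] at this
  rw [this, inv_smul_smul₀ hc]

theorem mul (hc : HomogeneousOnBall R f c) (hd : HomogeneousOnBall R f d) (hd1 : |d| ≤ 1) :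
    HomogeneousOnBall R f (c * d) := by
  intro u hu hcdu
  rw [mul_smul] at hcdu ⊢
  rw [hc _ (norm_smul_lt_of_abs_le_one hd1 hu) hcdu, hd.map_smul_of_abs_le_one hd1 hu, smul_smul]

theorem pow (h : HomogeneousOnBall R f c) (hc : |c| ≤ 1) (k : ℕ) :
    HomogeneousOnBall R f (c ^ k) := by
  induction k with
  | zero => intro u _ _; simp
  | succ k ih => rw [pow_succ]; exact ih.mul h hc

theorem exists_lt_one (h : HomogeneousOnBall R f c) (hc0 : 0 < c) (hc1 : c ≠ 1) :
    ∃ e, 0 < e ∧ e < 1 ∧ HomogeneousOnBall R f e := by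
  rcases hc1.lt_or_gt with hc1 | hc1
  · exact ⟨c, hc0, hc1, h⟩
  · exact ⟨c⁻¹, inv_pos.mpr hc0, inv_lt_one_of_one_lt₀ hc1, h.inv hc0.ne'⟩

theorem map_add_of_eventually (h : HomogeneousOnBall R f c) (hc0 : 0 < c) (hc1 : c < 1)
    {x y : E} (hx : ‖x‖ < R) (hy : ‖y‖ < R) (hxy : ‖x + y‖ < R)
    (hsmall : ∀ᶠ ε in 𝓝 (0 : ℝ), f (ε • (x + y)) = f (ε • x) + f (ε • y)) :
    f (x + y) = f x + f y := by
  obtain ⟨k, hk⟩ := ((tendsto_pow_atTop_nhds_zero_of_lt_one hc0.le hc1).eventually hsmall).exists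
  have hck : |c ^ k| ≤ 1 := by
    rw [abs_of_pos (pow_pos hc0 k)]
    exact pow_le_one₀ hc0.le hc1.le
  have hpow := h.pow ((abs_of_pos hc0).trans_le hc1.le) k
  rw [hpow.map_smul_of_abs_le_one hck hxy, hpow.map_smul_of_abs_le_one hck hx,
    hpow.map_smul_of_abs_le_one hck hy, ← smul_add] at hk
  exact smul_right_injective Y (pow_pos hc0 k).ne' hk

end HomogeneousOnBall

end Homogeneous

section Orthogonal

variable {X Y : Type*} [NormedAddCommGroup X] [InnerProductSpace ℝ X] [AddCommGroup Y]
  [Module ℝ Y] {R A B : ℝ} {f : X → Y}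

def OrthJensenOnBall (R : ℝ) (f : X → Y) (A B : ℝ) : Prop :=
  ∀ a b : X, ‖a‖ < R → ‖b‖ < R → inner ℝ a b = 0 → ‖A • a + B • b‖ < R →
    f (A • a + B • b) = A • f a + B • f b

namespace OrthJensenOnBall

theorem homogeneousOnBall_left (h : OrthJensenOnBall R f A B) (hR : 0 < R) (hf0 : f 0 = 0) :
    HomogeneousOnBall R f A := by
  intro u hu hAu
  simpa [hf0] using h u 0 hu (by simpa using hR) (inner_zero_right u) (by simpa using hAu)

theorem homogeneousOnBall_right (h : OrthJensenOnBall R f A B) (hR : 0 < R) (hf0 : f 0 = 0) :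
    HomogeneousOnBall R f B := by
  intro u hu hBu
  simpa [hf0] using h 0 u (by simpa using hR) hu (inner_zero_left u) (by simpa using hBu)

theorem eventually_map_smul_add (h : OrthJensenOnBall R f A B) (hR : 0 < R) (hf0 : f 0 = 0)
    (hA0 : A ≠ 0) (hB0 : B ≠ 0) {x y : X} (hxy : inner ℝ x y = 0) :
    ∀ᶠ ε in 𝓝 (0 : ℝ), f (ε • (x + y)) = f (ε • x) + f (ε • y) := by
  have small (v : X) : ∀ᶠ ε in 𝓝 (0 : ℝ), ‖ε • v‖ < R := by
    have hcont : Continuous fun ε : ℝ ↦ ‖ε • v‖ := by fun_prop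
    exact (hcont.tendsto 0).eventually (gt_mem_nhds (by simpa using hR))
  have hA := h.homogeneousOnBall_left hR hf0
  have hB := h.homogeneousOnBall_right hR hf0
  filter_upwards [small x, small (B • x), small y, small (A • y), small (x + y),
    small (B • (x + y)), small (A • B • (x + y))] with ε hx hBx hy hAy hxy' hBxy hABxy
  rw [smul_comm] at hBx hAy hBxy
  rw [smul_comm, smul_comm ε B] at hABxy
  have horth : inner ℝ (B • ε • x) (A • ε • y) = (0 : ℝ) := by
    simp [real_inner_smul_left, real_inner_smul_right, hxy]
  have hsum : A • B • ε • x + B • A • ε • y = A • B • ε • (x + y) := by module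
  have key := h _ _ hBx hAy horth (by rwa [hsum])
  rw [hsum, hA _ hBxy hABxy, hB _ hxy' hBxy, hB _ hx hBx, hA _ hy hAy, smul_comm B A,
    ← smul_add, ← smul_add, smul_smul, smul_smul] at key
  exact smul_right_injective Y (mul_ne_zero hA0 hB0) key

end OrthJensenOnBall

end Orthogonal

theorem stmt_12 {X Y : Type*} [NormedAddCommGroup X] [InnerProductSpace ℝ X]
    [AddCommGroup Y] [Module ℝ Y]
    (R : ℝ) (hR : 0 < R)
    (r s t : ℕ) (hr : 0 < r) (hs : 0 < s) (ht : 0 < t)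
    (f : X → Y) (hf0 : f 0 = 0)
    (heq : ∀ x y : X, ‖x‖ < R → ‖y‖ < R → (inner ℝ x y : ℝ) = 0 →
      ‖((r : ℝ)⁻¹) • ((s : ℝ) • x + (t : ℝ) • y)‖ < R →
      (r : ℝ) • f (((r : ℝ)⁻¹) • ((s : ℝ) • x + (t : ℝ) • y)) = (s : ℝ) • f x + (t : ℝ) • f y) :
    ∀ x y : X, ‖x‖ < R → ‖y‖ < R → (inner ℝ x y : ℝ) = 0 → ‖x + y‖ < R →
      f (x + y) = f x + f y := by
  intro x y hx hy hxy hxyR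
  have hr0 : (r : ℝ) ≠ 0 := by positivity
  have hA0 : (0 : ℝ) < s / r := by positivity
  have hB0 : (0 : ℝ) < t / r := by positivity
  have hJ : OrthJensenOnBall R f (s / r) (t / r) := by
    intro a b ha hb hab hnorm
    have hrw : (r : ℝ)⁻¹ • ((s : ℝ) • a + (t : ℝ) • b) = (s / r : ℝ) • a + (t / r : ℝ) • b := by
      module
    have := heq a b ha hb hab (hrw ▸ hnorm)
    rw [hrw, ← eq_inv_smul_iff₀ hr0] at this
    rw [this]
    module
  by_cases h1 : (s / r : ℝ) = 1 ∧ (t / r : ℝ) = 1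
  · simpa [h1] using hJ x y hx hy hxy (by simpa [h1] using hxyR)
  obtain ⟨e, he0, he1, he⟩ : ∃ e, 0 < e ∧ e < 1 ∧ HomogeneousOnBall R f e := by
    rcases not_and_or.mp h1 with h1 | h1
    exacts [(hJ.homogeneousOnBall_left hR hf0).exists_lt_one hA0 h1,
      (hJ.homogeneousOnBall_right hR hf0).exists_lt_one hB0 h1]
  exact he.map_add_of_eventually he0 he1 hx hy hxyR
    (hJ.eventually_map_smul_add hR hf0 hA0.ne' hB0.ne' hxy)
end

section
/- Let X be a real inner product space of dimension ≥ 2, λ ≥ 1 a real number, Y a real vector space, B an open ball centered at 0, and f : B \ {0} → Y an odd map satisfying f(λ(x + y)) = λf(x) + λf(y) for all nonzero x, y ∈ B \ {0} with ⟨x, y⟩ = 0 (whenever λ(x+y) ∈ B). Then f(x) = 2λ²·f(x/(2λ²)) for all x ∈ B \ {0}. -/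
/-!
Put `v = x / (2λ²)` and choose `y ⟂ v` with `‖y‖ = ‖v‖`, which the dimension bound allows.
Then `p = λ(v + y)` and `q = λ(v - y)` are orthogonal, since `v` and `y` have equal norms, and
`λ(p + q) = x`. Applying the equation to `(p, q)`, then to `(v, y)` and `(v, -y)`, and using
`f(-y) = -f(y)`, gives `f(x) = λ²(2 f(v) + f(y) + f(-y)) = 2λ² f(v)`.
-/

open RealInnerProductSpace

section

variable {X : Type*} [NormedAddCommGroup X] [InnerProductSpace ℝ X]

theorem exists_inner_eq_zero_norm_eq (hdim : 2 ≤ Module.rank ℝ X) (v : X) :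
    ∃ y : X, ⟪v, y⟫ = 0 ∧ ‖y‖ = ‖v‖ := by
  have hK : (ℝ ∙ v) ≠ ⊤ := by
    intro htop
    have := hdim.trans ((rank_top ℝ X).symm.trans_le (htop ▸ rank_span_le {v}))
    norm_num at this
  obtain ⟨u, hu, hu0⟩ :=
    Submodule.exists_mem_ne_zero_of_ne_bot (mt Submodule.orthogonal_eq_bot_iff.mp hK)
  refine ⟨(‖v‖ / ‖u‖) • u, ?_, ?_⟩
  · rw [real_inner_smul_right, Submodule.mem_orthogonal_singleton_iff_inner_right.mp hu,
      mul_zero]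
  · rw [norm_smul, Real.norm_of_nonneg (by positivity),
      div_mul_cancel₀ _ (norm_ne_zero_iff.mpr hu0)]

theorem add_ne_zero_of_inner_eq_zero {v y : X} (hv : v ≠ 0) (h : ⟪v, y⟫ = 0) : v + y ≠ 0 := by
  intro h0
  have := norm_add_sq_eq_norm_sq_add_norm_sq_real h
  rw [h0, norm_zero] at this
  nlinarith [norm_pos_iff.mpr hv, mul_self_nonneg ‖y‖]

theorem norm_smul_add_le_of_norm_eq {lam : ℝ} (hlam : 1 ≤ lam) {v y : X} (hn : ‖y‖ = ‖v‖) :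
    ‖lam • (v + y)‖ ≤ ‖(2 * lam ^ 2) • v‖ := by
  rw [norm_smul, norm_smul, Real.norm_of_nonneg (by linarith),
    Real.norm_of_nonneg (by positivity)]
  calc lam * ‖v + y‖ ≤ lam * (‖v‖ + ‖y‖) := by gcongr; exact norm_add_le v y
    _ = 2 * lam * ‖v‖ := by rw [hn]; ring
    _ ≤ 2 * lam ^ 2 * ‖v‖ := by gcongr; nlinarith

theorem norm_le_norm_two_mul_sq_smul {lam : ℝ} (hlam : 1 ≤ lam) (v : X) :
    ‖v‖ ≤ ‖(2 * lam ^ 2) • v‖ := by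
  rw [norm_smul, Real.norm_of_nonneg (by positivity)]
  exact le_mul_of_one_le_left (norm_nonneg v) (by nlinarith)

variable {Y : Type*} [AddCommGroup Y] [Module ℝ Y]

theorem map_smul_add_of_inner_eq_zero {lam R : ℝ} {f : X → Y}
    (heq : ∀ x y : X, x ≠ 0 → y ≠ 0 → ‖x‖ < R → ‖y‖ < R → (inner ℝ x y : ℝ) = 0 →
      ‖lam • (x + y)‖ < R → f (lam • (x + y)) = lam • f x + lam • f y)
    (hlam : 1 ≤ lam) {v y : X} (hv : v ≠ 0) (hvy : ⟪v, y⟫ = 0) (hn : ‖y‖ = ‖v‖)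
    (hR : ‖(2 * lam ^ 2) • v‖ < R) :
    f (lam • (v + y)) = lam • f v + lam • f y := by
  have hvR : ‖v‖ < R := (norm_le_norm_two_mul_sq_smul hlam v).trans_lt hR
  exact heq v y hv (norm_ne_zero_iff.mp (hn ▸ norm_ne_zero_iff.mpr hv)) hvR (hn ▸ hvR) hvy
    ((norm_smul_add_le_of_norm_eq hlam hn).trans_lt hR)

theorem map_two_mul_sq_smul_of_inner_eq_zero {lam R : ℝ} {f : X → Y}
    (hodd : ∀ x : X, x ≠ 0 → ‖x‖ < R → f (-x) = -f x)
    (heq : ∀ x y : X, x ≠ 0 → y ≠ 0 → ‖x‖ < R → ‖y‖ < R → (inner ℝ x y : ℝ) = 0 →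
      ‖lam • (x + y)‖ < R → f (lam • (x + y)) = lam • f x + lam • f y)
    (hlam : 1 ≤ lam) {v y : X} (hv : v ≠ 0) (hvy : ⟪v, y⟫ = 0) (hn : ‖y‖ = ‖v‖)
    (hR : ‖(2 * lam ^ 2) • v‖ < R) :
    f ((2 * lam ^ 2) • v) = (2 * lam ^ 2) • f v := by
  have hvy' : ⟪v, -y⟫ = 0 := by rw [inner_neg_right, hvy, neg_zero]
  have hn' : ‖-y‖ = ‖v‖ := by rw [norm_neg, hn]
  set p := lam • (v + y)
  set q := lam • (v + -y)
  have hp := map_smul_add_of_inner_eq_zero heq hlam hv hvy hn hR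
  have hq := map_smul_add_of_inner_eq_zero heq hlam hv hvy' hn' hR
  have hpq : ⟪p, q⟫ = 0 := by
    rw [real_inner_smul_left, real_inner_smul_right, ← sub_eq_add_neg,
      (real_inner_add_sub_eq_zero_iff v y).mpr hn.symm, mul_zero, mul_zero]
  have hpq_sum : lam • (p + q) = (2 * lam ^ 2) • v := by module
  have hyR : ‖y‖ < R := hn ▸ (norm_le_norm_two_mul_sq_smul hlam v).trans_lt hR
  have hy : y ≠ 0 := norm_ne_zero_iff.mp (hn ▸ norm_ne_zero_iff.mpr hv)
  have hlam0 : lam ≠ 0 := by positivity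
  have hpq_eq : f (lam • (p + q)) = lam • f p + lam • f q :=
    heq p q (smul_ne_zero hlam0 (add_ne_zero_of_inner_eq_zero hv hvy))
      (smul_ne_zero hlam0 (add_ne_zero_of_inner_eq_zero hv hvy'))
      ((norm_smul_add_le_of_norm_eq hlam hn).trans_lt hR)
      ((norm_smul_add_le_of_norm_eq hlam hn').trans_lt hR) hpq (hpq_sum ▸ hR)
  rw [← hpq_sum, hpq_eq, hp, hq, hodd y hy hyR]
  module

end

theorem stmt_14_general {X Y : Type*} [NormedAddCommGroup X] [InnerProductSpace ℝ X]
    [AddCommGroup Y] [Module ℝ Y]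
    (hdim : 2 ≤ Module.rank ℝ X)
    (lam : ℝ) (hlam : 1 ≤ lam)
    (R : ℝ)
    (f : X → Y)
    (hodd : ∀ x : X, x ≠ 0 → ‖x‖ < R → f (-x) = -f x)
    (heq : ∀ x y : X, x ≠ 0 → y ≠ 0 → ‖x‖ < R → ‖y‖ < R → (inner ℝ x y : ℝ) = 0 →
      ‖lam • (x + y)‖ < R → f (lam • (x + y)) = lam • f x + lam • f y) :
    ∀ x : X, x ≠ 0 → ‖x‖ < R → f x = (2 * lam ^ 2) • f ((2 * lam ^ 2)⁻¹ • x) := by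
  intro x hx hxR
  have hc : 2 * lam ^ 2 ≠ 0 := by positivity
  obtain ⟨y, hvy, hn⟩ := exists_inner_eq_zero_norm_eq hdim ((2 * lam ^ 2)⁻¹ • x)
  calc f x = f ((2 * lam ^ 2) • (2 * lam ^ 2)⁻¹ • x) := by rw [smul_inv_smul₀ hc]
    _ = (2 * lam ^ 2) • f ((2 * lam ^ 2)⁻¹ • x) :=
      map_two_mul_sq_smul_of_inner_eq_zero hodd heq hlam (smul_ne_zero (inv_ne_zero hc) hx)
        hvy hn (by rwa [smul_inv_smul₀ hc])

theorem stmt_14 {X Y : Type*} [NormedAddCommGroup X] [InnerProductSpace ℝ X]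
    [AddCommGroup Y] [Module ℝ Y]
    (hdim : 2 ≤ Module.rank ℝ X)
    (lam : ℝ) (hlam : 1 ≤ lam)
    (R : ℝ) (hR : 0 < R)
    (f : X → Y)
    (hodd : ∀ x : X, x ≠ 0 → ‖x‖ < R → f (-x) = -f x)
    (heq : ∀ x y : X, x ≠ 0 → y ≠ 0 → ‖x‖ < R → ‖y‖ < R → (inner ℝ x y : ℝ) = 0 →
      ‖lam • (x + y)‖ < R → f (lam • (x + y)) = lam • f x + lam • f y) :
    ∀ x : X, x ≠ 0 → ‖x‖ < R → f x = (2 * lam ^ 2) • f ((2 * lam ^ 2)⁻¹ • x) :=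
  stmt_14_general hdim lam hlam R f hodd heq
end

section
/- Let X be a real vector space, Y a real vector space, and r, s, t positive integers. A map f : X → Y with f(0) = 0 satisfies r·f((s·x + t·y)/r) = s·f(x) + t·f(y) for all x, y ∈ X if and only if f is additive. -/
theorem stmt_15 {X Y : Type*} [AddCommGroup X] [Module ℝ X] [AddCommGroup Y] [Module ℝ Y]
    (r s t : ℕ) (hr : 0 < r) (hs : 0 < s) (ht : 0 < t)
    (f : X → Y) (hf0 : f 0 = 0) :
    (∀ x y : X,
      (r : ℝ) • f (((r : ℝ)⁻¹) • ((s : ℝ) • x + (t : ℝ) • y)) = (s : ℝ) • f x + (t : ℝ) • f y)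
    ↔ (∀ x y : X, f (x + y) = f x + f y) := by
  have hr' : (r : ℝ) ≠ 0 := Nat.cast_ne_zero.mpr hr.ne'
  have hs' : (s : ℝ) ≠ 0 := Nat.cast_ne_zero.mpr hs.ne'
  have ht' : (t : ℝ) ≠ 0 := Nat.cast_ne_zero.mpr ht.ne'
  constructor
  · intro h u v
    have hx : ∀ x : X, (r : ℝ) • f ((r : ℝ)⁻¹ • ((s : ℝ) • x)) = (s : ℝ) • f x := by
      intro x
      have := h x 0
      simpa [hf0] using this
    have hy : ∀ y : X, (r : ℝ) • f ((r : ℝ)⁻¹ • ((t : ℝ) • y)) = (t : ℝ) • f y := by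
      intro y
      have := h 0 y
      simpa [hf0] using this
    have key := h ((s : ℝ)⁻¹ • (r : ℝ) • u) ((t : ℝ)⁻¹ • (r : ℝ) • v)
    have e1 : (s : ℝ) • ((s : ℝ)⁻¹ • (r : ℝ) • u) = (r : ℝ) • u := by
      rw [smul_smul, mul_inv_cancel₀ hs', one_smul]
    have e2 : (t : ℝ) • ((t : ℝ)⁻¹ • (r : ℝ) • v) = (r : ℝ) • v := by
      rw [smul_smul, mul_inv_cancel₀ ht', one_smul]
    rw [e1, e2] at key
    have e3 : (r : ℝ)⁻¹ • ((r : ℝ) • u + (r : ℝ) • v) = u + v := by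
      rw [smul_add, smul_smul, smul_smul, inv_mul_cancel₀ hr', one_smul, one_smul]
    rw [e3] at key
    have k1 := hx ((s : ℝ)⁻¹ • (r : ℝ) • u)
    rw [e1] at k1
    have k2 := hy ((t : ℝ)⁻¹ • (r : ℝ) • v)
    rw [e2] at k2
    have e4 : (r : ℝ)⁻¹ • (r : ℝ) • u = u := by
      rw [smul_smul, inv_mul_cancel₀ hr', one_smul]
    have e5 : (r : ℝ)⁻¹ • (r : ℝ) • v = v := by
      rw [smul_smul, inv_mul_cancel₀ hr', one_smul]
    rw [e4] at k1
    rw [e5] at k2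
    rw [← k1, ← k2, ← smul_add] at key
    exact smul_right_injective Y hr' key
  · intro h x y
    set F : X →+ Y := AddMonoidHom.mk' f h with hF
    have hrat : ∀ (q : ℚ) (z : X), f ((q : ℝ) • z) = (q : ℝ) • f z := by
      intro q z
      exact map_ratCast_smul F ℝ ℝ q z
    have hcast : ∀ n : ℕ, ((n : ℚ) : ℝ) = (n : ℝ) := by intro n; push_cast; ring
    have hinv : (((r : ℚ)⁻¹ : ℚ) : ℝ) = (r : ℝ)⁻¹ := by push_cast; ring
    calc (r : ℝ) • f ((r : ℝ)⁻¹ • ((s : ℝ) • x + (t : ℝ) • y))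
        = (r : ℝ) • f ((((r : ℚ)⁻¹ : ℚ) : ℝ) • ((s : ℝ) • x + (t : ℝ) • y)) := by rw [hinv]
      _ = (r : ℝ) • ((((r : ℚ)⁻¹ : ℚ) : ℝ) • f ((s : ℝ) • x + (t : ℝ) • y)) := by
            rw [hrat]
      _ = (r : ℝ) • ((r : ℝ)⁻¹ • (f ((s : ℝ) • x) + f ((t : ℝ) • y))) := by
            rw [hinv, h]
      _ = f ((s : ℝ) • x) + f ((t : ℝ) • y) := by
            rw [smul_smul, mul_inv_cancel₀ hr', one_smul]
      _ = (s : ℝ) • f x + (t : ℝ) • f y := by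
            rw [← hcast s, ← hcast t, hrat, hrat, hcast s, hcast t]
end

section
/- Let X be a real linear space, Y a real Banach space, r, s, t positive integers. If f, g, h : X → Y satisfy f(0) = g(0) = h(0) = 0 and ‖r·f((s·x + t·y)/r) − s·g(x) − t·h(y)‖ ≤ φ(x, y) for all x, y ∈ X, then ‖f(x+y) − f(x) − f(y)‖ ≤ (1/r)[φ((r/s)x, (r/t)y) + φ((r/s)x, 0) + φ(0, (r/t)y)] for all x, y ∈ X. -/
theorem stmt_16 {X Y : Type*} [AddCommGroup X] [Module ℝ X]
    [NormedAddCommGroup Y] [NormedSpace ℝ Y]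
    (r s t : ℕ) (hr : 0 < r) (hs : 0 < s) (ht : 0 < t)
    (f g h : X → Y) (φ : X → X → ℝ)
    (hf0 : f 0 = 0) (hg0 : g 0 = 0) (hh0 : h 0 = 0)
    (hineq : ∀ x y : X,
      ‖(r : ℝ) • f (((r : ℝ)⁻¹) • ((s : ℝ) • x + (t : ℝ) • y)) - (s : ℝ) • g x - (t : ℝ) • h y‖
        ≤ φ x y) :
    ∀ x y : X, ‖f (x + y) - f x - f y‖ ≤ (1 / r : ℝ) *
      (φ (((r : ℝ) / s) • x) (((r : ℝ) / t) • y) + φ (((r : ℝ) / s) • x) 0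
        + φ 0 (((r : ℝ) / t) • y)) := by
  intro x y
  have hr' : (r : ℝ) ≠ 0 := Nat.cast_ne_zero.2 hr.ne'
  have hs' : (s : ℝ) ≠ 0 := Nat.cast_ne_zero.2 hs.ne'
  have ht' : (t : ℝ) ≠ 0 := Nat.cast_ne_zero.2 ht.ne'
  set a : X := ((r : ℝ) / s) • x with ha
  set b : X := ((r : ℝ) / t) • y with hb
  have hsa : (s : ℝ) • a = (r : ℝ) • x := by
    rw [ha, smul_smul, mul_div_cancel₀ _ hs']
  have htb : (t : ℝ) • b = (r : ℝ) • y := by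
    rw [hb, smul_smul, mul_div_cancel₀ _ ht']
  have hinv : ∀ z : X, ((r : ℝ)⁻¹) • ((r : ℝ) • z) = z := fun z => by
    rw [smul_smul, inv_mul_cancel₀ hr', one_smul]
  have h1 := hineq a b
  rw [hsa, htb, ← smul_add, hinv] at h1
  have h2 := hineq a 0
  rw [hsa, smul_zero, add_zero, hinv, hh0, smul_zero, sub_zero] at h2
  have h3 := hineq 0 b
  rw [htb, smul_zero, zero_add, hinv, hg0, smul_zero, sub_zero] at h3
  have key : ‖(r : ℝ) • (f (x + y) - f x - f y)‖ ≤
      φ a b + φ a 0 + φ 0 b := by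
    have : (r : ℝ) • (f (x + y) - f x - f y) =
        ((r : ℝ) • f (x + y) - (s : ℝ) • g a - (t : ℝ) • h b)
        - ((r : ℝ) • f x - (s : ℝ) • g a)
        - ((r : ℝ) • f y - (t : ℝ) • h b) := by
      simp [smul_sub]; abel
    rw [this]
    calc _ ≤ ‖((r : ℝ) • f (x + y) - (s : ℝ) • g a - (t : ℝ) • h b)
        - ((r : ℝ) • f x - (s : ℝ) • g a)‖ + ‖(r : ℝ) • f y - (t : ℝ) • h b‖ :=
          norm_sub_le _ _
      _ ≤ ‖(r : ℝ) • f (x + y) - (s : ℝ) • g a - (t : ℝ) • h b‖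
          + ‖(r : ℝ) • f x - (s : ℝ) • g a‖ + ‖(r : ℝ) • f y - (t : ℝ) • h b‖ := by
          gcongr; exact norm_sub_le _ _
      _ ≤ φ a b + φ a 0 + φ 0 b := by gcongr
  rw [norm_smul, Real.norm_natCast] at key
  rw [div_mul_eq_mul_div, one_mul, le_div_iff₀ (by positivity), mul_comm]
  exact key
end

section
/- Let X₀ = X \ {0} for a real linear space X, Y a real Banach space, and F, G, H : X → Y maps with F(0)=G(0)=H(0)=0 satisfying ‖F(x+y) − G(x) − H(y)‖ ≤ φ(x, y) for all x, y ∈ X₀, where φ : X₀ × X₀ → [0, ∞). If H is odd, then ‖F(x) − (1/3)F(3x)‖ ≤ ψ(x) for all x ∈ X₀, where ψ(x) := (2/3)φ((3/2)x, (−1/2)x) + (1/3)φ((3/2)x, (3/2)x) + (1/3)φ((3/2)x, (−3/2)x) + (1/3)φ((1/2)x, (1/2)x) + (1/3)φ((1/2)x, (−1/2)x). -/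
theorem stmt_17 {X Y : Type*} [AddCommGroup X] [Module ℝ X]
    [NormedAddCommGroup Y] [NormedSpace ℝ Y]
    (F G H : X → Y) (φ : X → X → ℝ)
    (hF0 : F 0 = 0) (hG0 : G 0 = 0) (hH0 : H 0 = 0)
    (hHodd : ∀ x : X, H (-x) = -H x)
    (hineq : ∀ x y : X, x ≠ 0 → y ≠ 0 → ‖F (x + y) - G x - H y‖ ≤ φ x y) :
    ∀ x : X, x ≠ 0 →
      ‖F x - (3 : ℝ)⁻¹ • F ((3 : ℝ) • x)‖ ≤
        (2 / 3 : ℝ) * φ ((3 / 2 : ℝ) • x) ((-1 / 2 : ℝ) • x)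
        + (1 / 3 : ℝ) * φ ((3 / 2 : ℝ) • x) ((3 / 2 : ℝ) • x)
        + (1 / 3 : ℝ) * φ ((3 / 2 : ℝ) • x) ((-3 / 2 : ℝ) • x)
        + (1 / 3 : ℝ) * φ ((1 / 2 : ℝ) • x) ((1 / 2 : ℝ) • x)
        + (1 / 3 : ℝ) * φ ((1 / 2 : ℝ) • x) ((-1 / 2 : ℝ) • x) := by
  intro x hx
  have h32 : (3 / 2 : ℝ) • x ≠ 0 := smul_ne_zero (by norm_num) hx
  have h12 : (1 / 2 : ℝ) • x ≠ 0 := smul_ne_zero (by norm_num) hx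
  have hn32 : (-3 / 2 : ℝ) • x ≠ 0 := smul_ne_zero (by norm_num) hx
  have hn12 : (-1 / 2 : ℝ) • x ≠ 0 := smul_ne_zero (by norm_num) hx
  have e1 := hineq _ _ h32 hn12
  have e2 := hineq _ _ h32 h32
  have e3 := hineq _ _ h32 hn32
  have e4 := hineq _ _ h12 h12
  have e5 := hineq _ _ h12 hn12
  have hodd12 : H ((-1 / 2 : ℝ) • x) = - H ((1 / 2 : ℝ) • x) := by
    rw [show ((-1 / 2 : ℝ) • x) = -((1 / 2 : ℝ) • x) by module, hHodd]
  have hodd32 : H ((-3 / 2 : ℝ) • x) = - H ((3 / 2 : ℝ) • x) := by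
    rw [show ((-3 / 2 : ℝ) • x) = -((3 / 2 : ℝ) • x) by module, hHodd]
  rw [show (3 / 2 : ℝ) • x + (-1 / 2 : ℝ) • x = x by module, hodd12] at e1
  rw [show (3 / 2 : ℝ) • x + (3 / 2 : ℝ) • x = (3 : ℝ) • x by module] at e2
  rw [show (3 / 2 : ℝ) • x + (-3 / 2 : ℝ) • x = (0 : X) by module, hodd32, hF0] at e3
  rw [show (1 / 2 : ℝ) • x + (1 / 2 : ℝ) • x = x by module] at e4
  rw [show (1 / 2 : ℝ) • x + (-1 / 2 : ℝ) • x = (0 : X) by module, hodd12, hF0] at e5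
  set a := (3 / 2 : ℝ) • x
  set b := (1 / 2 : ℝ) • x
  have key : F x - (3 : ℝ)⁻¹ • F ((3 : ℝ) • x) =
      (2 / 3 : ℝ) • (F x - G a - -H b)
      + (-(1 / 3 : ℝ)) • (F ((3 : ℝ) • x) - G a - H a)
      + (-(1 / 3 : ℝ)) • ((0 : Y) - G a - -H a)
      + (1 / 3 : ℝ) • (F x - G b - H b)
      + (-(1 / 3 : ℝ)) • ((0 : Y) - G b - -H b) := by module
  rw [key]
  have tri : ∀ u v w s t : Y, ‖u + v + w + s + t‖ ≤ ‖u‖ + ‖v‖ + ‖w‖ + ‖s‖ + ‖t‖ := by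
    intro u v w s t
    calc ‖u + v + w + s + t‖ ≤ ‖u + v + w + s‖ + ‖t‖ := norm_add_le _ _
      _ ≤ ‖u + v + w‖ + ‖s‖ + ‖t‖ := by gcongr; exact norm_add_le _ _
      _ ≤ ‖u + v‖ + ‖w‖ + ‖s‖ + ‖t‖ := by gcongr; exact norm_add_le _ _
      _ ≤ ‖u‖ + ‖v‖ + ‖w‖ + ‖s‖ + ‖t‖ := by gcongr; exact norm_add_le _ _
  refine le_trans (tri _ _ _ _ _) ?_
  simp only [norm_smul, Real.norm_eq_abs]
  have : |(2 / 3 : ℝ)| = 2 / 3 := by norm_num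
  rw [this, show |(-(1 / 3 : ℝ))| = 1 / 3 by norm_num, show |(1 / 3 : ℝ)| = 1 / 3 by norm_num]
  gcongr <;> assumption
end

section
/- Let X₀ = X \ {0} for a real linear space X, Y a real Banach space, and F, G, H : X → Y maps with F(0)=G(0)=H(0)=0 satisfying ‖F(x+y) − G(x) − H(y)‖ ≤ φ(x, y) for all x, y ∈ X₀, where φ : X₀ × X₀ → [0, ∞). If H is even, then ‖F(x)‖ ≤ φ(x/2, x/2) + φ(x/2, −x/2) and ‖G(x) + H(x)‖ ≤ φ(x, −x) for all x ∈ X₀. -/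
theorem stmt_18 {X Y : Type*} [AddCommGroup X] [Module ℝ X]
    [NormedAddCommGroup Y] [NormedSpace ℝ Y]
    (F G H : X → Y) (φ : X → X → ℝ)
    (hF0 : F 0 = 0) (hG0 : G 0 = 0) (hH0 : H 0 = 0)
    (hHeven : ∀ x : X, H (-x) = H x)
    (hineq : ∀ x y : X, x ≠ 0 → y ≠ 0 → ‖F (x + y) - G x - H y‖ ≤ φ x y) :
    ∀ x : X, x ≠ 0 →
      ‖F x‖ ≤ φ ((1 / 2 : ℝ) • x) ((1 / 2 : ℝ) • x) + φ ((1 / 2 : ℝ) • x) ((-1 / 2 : ℝ) • x)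
      ∧ ‖G x + H x‖ ≤ φ x (-x) := by
  intro x hx
  have hh : (1 / 2 : ℝ) • x ≠ 0 := by
    simp [smul_eq_zero, hx]
  have hneg : ((-1 / 2 : ℝ) • x) = -((1 / 2 : ℝ) • x) := by
    rw [← neg_smul]; norm_num
  have hhx : (1 / 2 : ℝ) • x + (1 / 2 : ℝ) • x = x := by
    rw [← add_smul]; norm_num
  have h1 := hineq ((1/2:ℝ) • x) ((1/2:ℝ) • x) hh hh
  rw [hhx] at h1
  have h2 := hineq ((1/2:ℝ) • x) (-((1/2:ℝ) • x)) hh (by simpa using hh)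
  rw [add_neg_cancel, hF0, hHeven] at h2
  have hGH : ‖G ((1/2:ℝ) • x) + H ((1/2:ℝ) • x)‖ ≤ φ ((1/2:ℝ) • x) ((-1/2:ℝ) • x) := by
    rw [hneg]
    calc ‖G ((1/2:ℝ) • x) + H ((1/2:ℝ) • x)‖
        = ‖0 - G ((1/2:ℝ) • x) - H ((1/2:ℝ) • x)‖ := by
          rw [← norm_neg]; congr 1; abel
      _ ≤ _ := h2
  constructor
  · calc ‖F x‖ = ‖(F x - G ((1/2:ℝ) • x) - H ((1/2:ℝ) • x)) +
        (G ((1/2:ℝ) • x) + H ((1/2:ℝ) • x))‖ := by congr 1; abel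
      _ ≤ _ := le_trans (norm_add_le _ _) (add_le_add h1 hGH)
  · have h3 := hineq x (-x) hx (neg_ne_zero.mpr hx)
    rw [add_neg_cancel, hF0, hHeven] at h3
    calc ‖G x + H x‖ = ‖0 - G x - H x‖ := by rw [← norm_neg]; congr 1; abel
      _ ≤ _ := h3
end
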